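/- arXiv:2207.06016 — 7 statements merged into one kernel-verified Lean document; each statement's English description precedes it below -/
import Mathlib

section
/- Let A be an n×n real matrix (n ≥ 2) that is irreducible, entrywise nonnegative, symmetric and positive semidefinite, and let x ∈ ℝ^n have all entries positive. Then there exists a log-concavity index of A associated with x, and there exists a log-convexity index of A associated with x. -/
open Matrix

/-- A square matrix is irreducible if no permutation similarity puts it in block
upper triangular form; equivalently, for every nonempty proper subset `S` of indices
there are `i ∈ S` and `j ∉ S` with `A i j ≠ 0`. -/
def IsIrreducibleMatrix {n : ℕ} (A : Matrix (Fin n) (Fin n) ℝ) : Prop :=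
  ∀ S : Finset (Fin n), S.Nonempty → S ≠ Finset.univ → ∃ i ∈ S, ∃ j, j ∉ S ∧ A i j ≠ 0

/-- `i₀` is a log-concavity index of `A` associated with `x`: for all sufficiently large `k`,
the ratio `(A^k x)_{i₀} / (A^{k-1} x)_{i₀}` attains the maximum over all indices. -/
def IsLogConcavityIndex {n : ℕ} (A : Matrix (Fin n) (Fin n) ℝ) (x : Fin n → ℝ)
    (i₀ : Fin n) : Prop :=
  ∃ K : ℕ, 0 < K ∧ ∀ k : ℕ, K ≤ k →
    ((A ^ k).mulVec x i₀) / ((A ^ (k - 1)).mulVec x i₀)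
      = ⨆ i, ((A ^ k).mulVec x i) / ((A ^ (k - 1)).mulVec x i)

/-- `i₀` is a log-convexity index of `A` associated with `x`: for all sufficiently large `k`,
the ratio `(A^k x)_{i₀} / (A^{k-1} x)_{i₀}` attains the minimum over all indices. -/
def IsLogConvexityIndex {n : ℕ} (A : Matrix (Fin n) (Fin n) ℝ) (x : Fin n → ℝ)
    (i₀ : Fin n) : Prop :=
  ∃ K : ℕ, 0 < K ∧ ∀ k : ℕ, K ≤ k →
    ((A ^ k).mulVec x i₀) / ((A ^ (k - 1)).mulVec x i₀)
      = ⨅ i, ((A ^ k).mulVec x i) / ((A ^ (k - 1)).mulVec x i)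

/-! Since `A` is symmetric positive semidefinite, `(Aᵏx)ᵢ = ∑ⱼ cᵢⱼ μⱼᵏ` with eigenvalues `μⱼ ≥ 0`.
So for two indices `i, j` the Casoratian `(Aᵏ⁺¹x)ᵢ (Aᵏx)ⱼ - (Aᵏ⁺¹x)ⱼ (Aᵏx)ᵢ` is again an
exponential sum with nonnegative bases `μₚ μ_q`, and such a sum eventually has the sign of the
coefficient of its largest base with nonzero coefficient. As irreducibility makes the iterates
positive, the successive ratios of any two coordinates are therefore eventually ordered, and a
finite family of pairwise eventually ordered sequences has an eventual maximum and an eventual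
minimum. -/

open Filter Topology Finset

namespace Filter

variable {ι α β : Type*} [Finite ι] [Nonempty ι] [ConditionallyCompleteLinearOrder β]
  {l : Filter α} {u : ι → α → β}

theorem exists_eventually_eq_iSup (h : ∀ i j, u i ≤ᶠ[l] u j ∨ u j ≤ᶠ[l] u i) :
    ∃ i₀, ∀ᶠ a in l, u i₀ a = ⨆ i, u i a := by
  have := Fintype.ofFinite ι
  have : IsTrans (α → β) (· ≤ᶠ[l] ·) := ⟨fun _ _ _ => EventuallyLE.trans⟩
  have hdir : Directed (· ≤ᶠ[l] ·) u := fun i j =>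
    (h i j).elim (fun hij => ⟨j, hij, .refl _ _⟩) (fun hji => ⟨i, .refl _ _, hji⟩)
  obtain ⟨i₀, hi₀⟩ := hdir.finset_le univ
  refine ⟨i₀, ?_⟩
  filter_upwards [eventually_all.2 fun i => hi₀ i (mem_univ i)] with a ha
  exact le_antisymm (le_ciSup (f := fun i => u i a) (Finite.bddAbove_range _) i₀) (ciSup_le ha)

theorem exists_eventually_eq_iInf (h : ∀ i j, u i ≤ᶠ[l] u j ∨ u j ≤ᶠ[l] u i) :
    ∃ i₀, ∀ᶠ a in l, u i₀ a = ⨅ i, u i a :=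
  exists_eventually_eq_iSup (β := βᵒᵈ) fun i j => (h i j).symm

end Filter

def EventuallyOfConstSign (f : ℕ → ℝ) : Prop :=
  (∀ᶠ k in atTop, 0 ≤ f k) ∨ ∀ᶠ k in atTop, f k ≤ 0

theorem EventuallyOfConstSign.congr {f g : ℕ → ℝ} (hf : EventuallyOfConstSign f)
    (hfg : f =ᶠ[atTop] g) : EventuallyOfConstSign g :=
  hf.imp (fun h => by filter_upwards [h, hfg] with k hk hk' using hk'.symm ▸ hk)
    (fun h => by filter_upwards [h, hfg] with k hk hk' using hk'.symm ▸ hk)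

theorem eventuallyOfConstSign_sum_finset_mul_pow {T : Finset ℝ} (hT : ∀ b ∈ T, 0 ≤ b)
    (g : ℝ → ℝ) : EventuallyOfConstSign fun k => ∑ b ∈ T, g b * b ^ k := by
  classical
  set T' := {b ∈ T | 0 < b ∧ g b ≠ 0}
  have hT' : (fun k => ∑ b ∈ T', g b * b ^ k) =ᶠ[atTop] fun k => ∑ b ∈ T, g b * b ^ k := by
    filter_upwards [eventually_ne_atTop 0] with k hk
    refine sum_filter_of_ne fun b hb hne => ⟨(hT b hb).lt_of_ne ?_, left_ne_zero_of_mul hne⟩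
    rintro rfl
    simp [zero_pow hk] at hne
  refine EventuallyOfConstSign.congr ?_ hT'
  obtain hempty | hne := T'.eq_empty_or_nonempty
  · exact .inl (.of_forall fun k => by simp [hempty])
  set m := T'.max' hne
  have hm : 0 < m ∧ g m ≠ 0 := (mem_filter.1 (T'.max'_mem hne)).2
  have hlim : Tendsto (fun k => ∑ b ∈ T', g b * (b / m) ^ k) atTop (𝓝 (g m)) := by
    have hsum : ∑ b ∈ T', (if b = m then g b else 0) = g m := by
      rw [sum_ite_eq', if_pos (T'.max'_mem hne)]
    rw [← hsum]
    refine tendsto_finsetSum _ fun b hb => ?_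
    split_ifs with hbm
    · simp [hbm, div_self hm.1.ne']
    · have hb0 : 0 < b := (mem_filter.1 hb).2.1
      have hbm' : b < m := (T'.le_max' b hb).lt_of_ne hbm
      simpa using (tendsto_pow_atTop_nhds_zero_of_lt_one (div_nonneg hb0.le hm.1.le)
        ((div_lt_one hm.1).2 hbm')).const_mul (g b)
  have hscale : ∀ k, ∑ b ∈ T', g b * b ^ k = m ^ k * ∑ b ∈ T', g b * (b / m) ^ k := fun k => by
    rw [mul_sum]
    refine sum_congr rfl fun b _ => ?_
    rw [div_pow, mul_left_comm, mul_div_cancel₀ _ (pow_ne_zero k hm.1.ne')]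
  obtain hneg | hpos := hm.2.lt_or_gt
  · refine .inr ?_
    filter_upwards [hlim.eventually (eventually_lt_nhds hneg)] with k hk
    rw [hscale]
    exact mul_nonpos_of_nonneg_of_nonpos (pow_nonneg hm.1.le k) hk.le
  · refine .inl ?_
    filter_upwards [hlim.eventually (eventually_gt_nhds hpos)] with k hk
    rw [hscale]
    exact mul_nonneg (pow_nonneg hm.1.le k) hk.le

theorem eventuallyOfConstSign_sum_mul_pow {κ : Type*} {s : Finset κ} {t : κ → ℝ}
    (ht : ∀ a ∈ s, 0 ≤ t a) (c : κ → ℝ) :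
    EventuallyOfConstSign fun k => ∑ a ∈ s, c a * t a ^ k := by
  classical
  have hgroup : ∀ k, ∑ b ∈ s.image t, (∑ a ∈ s with t a = b, c a) * b ^ k
      = ∑ a ∈ s, c a * t a ^ k := fun k => by
    rw [← sum_fiberwise_of_maps_to (fun a ha => mem_image_of_mem t ha)]
    refine sum_congr rfl fun b _ => ?_
    rw [sum_mul]
    exact sum_congr rfl fun a ha => by rw [(mem_filter.1 ha).2]
  simp only [← hgroup]
  exact eventuallyOfConstSign_sum_finset_mul_pow (by simpa using ht) _

theorem eventuallyOfConstSign_casoratian {ι : Type*} [Fintype ι] {μ : ι → ℝ}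
    (hμ : ∀ j, 0 ≤ μ j) {a b : ι → ℝ} {u v : ℕ → ℝ} (hu : ∀ k, u k = ∑ j, a j * μ j ^ k)
    (hv : ∀ k, v k = ∑ j, b j * μ j ^ k) :
    EventuallyOfConstSign fun k => u (k + 1) * v k - v (k + 1) * u k := by
  have hexp : ∀ k, u (k + 1) * v k - v (k + 1) * u k
      = ∑ p ∈ univ ×ˢ univ, (a p.1 * b p.2 - b p.1 * a p.2) * μ p.1 * (μ p.1 * μ p.2) ^ k :=
    fun k => by
      simp only [hu, hv, sum_mul_sum, ← sum_sub_distrib, ← sum_product']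
      exact sum_congr rfl fun p _ => by ring
  simp only [hexp]
  exact eventuallyOfConstSign_sum_mul_pow (fun p _ => mul_nonneg (hμ p.1) (hμ p.2)) _

theorem EventuallyOfConstSign.eventuallyLE_total_ratio {u v : ℕ → ℝ} (hu : ∀ k, 0 < u k)
    (hv : ∀ k, 0 < v k) (h : EventuallyOfConstSign fun k => u (k + 1) * v k - v (k + 1) * u k) :
    (fun k => u k / u (k - 1)) ≤ᶠ[atTop] (fun k => v k / v (k - 1)) ∨
      (fun k => v k / v (k - 1)) ≤ᶠ[atTop] (fun k => u k / u (k - 1)) := by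
  have hshift {P : ℕ → Prop} (hP : ∀ᶠ m in atTop, P m) : ∀ᶠ k in atTop, ∃ m, k = m + 1 ∧ P m := by
    filter_upwards [(tendsto_sub_atTop_nat 1).eventually hP, eventually_ge_atTop 1] with k hk hk1
    exact ⟨k - 1, by omega, hk⟩
  rcases h with h | h
  · refine .inr ?_
    filter_upwards [hshift h] with k hk
    obtain ⟨m, rfl, hm⟩ := hk
    rw [add_tsub_cancel_right, div_le_div_iff₀ (hv m) (hu m)]
    linarith
  · refine .inl ?_
    filter_upwards [hshift h] with k hk
    obtain ⟨m, rfl, hm⟩ := hk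
    rw [add_tsub_cancel_right, div_le_div_iff₀ (hu m) (hv m)]
    linarith

namespace Matrix

theorem IsHermitian.exists_pow_mulVec_eq_sum {ι : Type*} [Fintype ι] [DecidableEq ι]
    {A : Matrix ι ι ℝ} (hA : A.IsHermitian) (x : ι → ℝ) :
    ∃ c : ι → ι → ℝ, ∀ k i, (A ^ k *ᵥ x) i = ∑ j, c i j * hA.eigenvalues j ^ k := by
  set U : Matrix ι ι ℝ := ↑hA.eigenvectorUnitary
  refine ⟨fun i j => U i j * (star U *ᵥ x) j, fun k i => ?_⟩
  have hpow : A ^ k = U * diagonal (fun j => hA.eigenvalues j ^ k) * star U := by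
    conv_lhs => rw [hA.spectral_theorem, ← map_pow, diagonal_pow]
    rfl
  rw [hpow, ← mulVec_mulVec, ← mulVec_mulVec, funext (mulVec_diagonal _ (star U *ᵥ x))]
  simp only [mulVec, dotProduct]
  exact sum_congr rfl fun j _ => by ring

variable {m n : Type*} [Fintype n]

theorem mulVec_pos {A : Matrix m n ℝ} (hA : ∀ i j, 0 ≤ A i j) (hrow : ∀ i, ∃ j, A i j ≠ 0)
    {y : n → ℝ} (hy : ∀ j, 0 < y j) (i : m) : 0 < (A *ᵥ y) i := by
  obtain ⟨j, hj⟩ := hrow i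
  exact sum_pos' (fun l _ => mul_nonneg (hA i l) (hy l).le)
    ⟨j, mem_univ j, mul_pos ((hA i j).lt_of_ne' hj) (hy j)⟩

theorem pow_mulVec_pos [DecidableEq n] {A : Matrix n n ℝ} (hA : ∀ i j, 0 ≤ A i j)
    (hrow : ∀ i, ∃ j, A i j ≠ 0) {y : n → ℝ} (hy : ∀ j, 0 < y j) (k : ℕ) (i : n) :
    0 < (A ^ k *ᵥ y) i := by
  induction k generalizing i with
  | zero => simpa using hy i
  | succ k ih =>
    rw [pow_succ', ← mulVec_mulVec]
    exact mulVec_pos hA hrow ih i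

end Matrix

theorem IsIrreducibleMatrix.exists_ne_zero {n : ℕ} (hn : 2 ≤ n) {A : Matrix (Fin n) (Fin n) ℝ}
    (hA : IsIrreducibleMatrix A) (i : Fin n) : ∃ j, A i j ≠ 0 := by
  have hi : {i} ≠ (univ : Finset (Fin n)) := fun h => by
    have := congrArg card h
    simp only [card_singleton, card_univ, Fintype.card_fin] at this
    omega
  obtain ⟨_, hi', j, -, hj⟩ := hA {i} (singleton_nonempty i) hi
  exact ⟨j, mem_singleton.1 hi' ▸ hj⟩

section LogIndex

variable {n : ℕ} {A : Matrix (Fin n) (Fin n) ℝ} {x : Fin n → ℝ} {i₀ : Fin n}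

theorem isLogConcavityIndex_of_eventually
    (h : ∀ᶠ k in atTop, (A ^ k *ᵥ x) i₀ / (A ^ (k - 1) *ᵥ x) i₀
      = ⨆ i, (A ^ k *ᵥ x) i / (A ^ (k - 1) *ᵥ x) i) :
    IsLogConcavityIndex A x i₀ := by
  obtain ⟨K, hK⟩ := eventually_atTop.1 h
  exact ⟨K + 1, K.succ_pos, fun k hk => hK k (by omega)⟩

theorem isLogConvexityIndex_of_eventually
    (h : ∀ᶠ k in atTop, (A ^ k *ᵥ x) i₀ / (A ^ (k - 1) *ᵥ x) i₀
      = ⨅ i, (A ^ k *ᵥ x) i / (A ^ (k - 1) *ᵥ x) i) :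
    IsLogConvexityIndex A x i₀ := by
  obtain ⟨K, hK⟩ := eventually_atTop.1 h
  exact ⟨K + 1, K.succ_pos, fun k hk => hK k (by omega)⟩

end LogIndex

/-- If `A` is an `n × n` (`n ≥ 2`) irreducible, entrywise nonnegative,
symmetric positive semidefinite real matrix and `x` is entrywise positive, then `A` has a
log-concavity index associated with `x` and a log-convexity index associated with `x`. -/
theorem exists_logConcavity_and_logConvexity_index {n : ℕ} (hn : 2 ≤ n)
    (A : Matrix (Fin n) (Fin n) ℝ) (x : Fin n → ℝ)
    (hirr : IsIrreducibleMatrix A) (hnonneg : ∀ i j, 0 ≤ A i j)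
    (hpsd : A.PosSemidef) (hx : ∀ i, 0 < x i) :
    (∃ i₁, IsLogConcavityIndex A x i₁) ∧ (∃ i₂, IsLogConvexityIndex A x i₂) := by
  have hpos : ∀ k i, 0 < (A ^ k *ᵥ x) i := pow_mulVec_pos hnonneg (hirr.exists_ne_zero hn) hx
  obtain ⟨c, hc⟩ := hpsd.isHermitian.exists_pow_mulVec_eq_sum x
  have hcomp : ∀ i j, (fun k => (A ^ k *ᵥ x) i / (A ^ (k - 1) *ᵥ x) i)
      ≤ᶠ[atTop] (fun k => (A ^ k *ᵥ x) j / (A ^ (k - 1) *ᵥ x) j) ∨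
      (fun k => (A ^ k *ᵥ x) j / (A ^ (k - 1) *ᵥ x) j)
      ≤ᶠ[atTop] (fun k => (A ^ k *ᵥ x) i / (A ^ (k - 1) *ᵥ x) i) := fun i j =>
    (eventuallyOfConstSign_casoratian hpsd.eigenvalues_nonneg (hc · i) (hc · j)
      ).eventuallyLE_total_ratio (hpos · i) (hpos · j)
  have : Nonempty (Fin n) := ⟨⟨0, by omega⟩⟩
  obtain ⟨i₁, h₁⟩ := exists_eventually_eq_iSup hcomp
  obtain ⟨i₂, h₂⟩ := exists_eventually_eq_iInf hcomp
  exact ⟨⟨i₁, isLogConcavityIndex_of_eventually h₁⟩, ⟨i₂, isLogConvexityIndex_of_eventually h₂⟩⟩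
end

section
/- Let A be an n×n irreducible nonnegative real matrix (n ≥ 2) and let x ∈ ℝ^n have all entries positive. (i) If i_1 is a log-concavity index of A associated with x and g_k = (A^k x)_{i_1} for k ≥ 0, then there exists k_1 > 0 such that g_{k−1} g_{k+1} ≤ g_k² for all k ≥ k_1; moreover, if the sequence (a_k(A,x))_{k≥k_1} is strictly decreasing, then g_{k−1} g_{k+1} < g_k² for all k ≥ k_1. (ii) If i_2 is a log-convexity index of A associated with x and h_k = (A^k x)_{i_2} for k ≥ 0, then there exists k_2 > 0 such that h_{k−1} h_{k+1} ≥ h_k² for all k ≥ k_2; moreover, if the sequence (b_k(A,x))_{k≥k_2} is strictly increasing, then h_{k−1} h_{k+1} > h_k² for all k ≥ k_2. -/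
open Matrix

/-- `a_k(A,x) = max_i (A^k x)_i / (A^{k-1} x)_i` for `k ≥ 1`. -/
noncomputable def aSeq {n : ℕ} (A : Matrix (Fin n) (Fin n) ℝ) (x : Fin n → ℝ) (k : ℕ) : ℝ :=
  ⨆ i, ((A ^ k).mulVec x i) / ((A ^ (k - 1)).mulVec x i)

/-- `b_k(A,x) = min_i (A^k x)_i / (A^{k-1} x)_i` for `k ≥ 1`. -/
noncomputable def bSeq {n : ℕ} (A : Matrix (Fin n) (Fin n) ℝ) (x : Fin n → ℝ) (k : ℕ) : ℝ :=
  ⨅ i, ((A ^ k).mulVec x i) / ((A ^ (k - 1)).mulVec x i)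

section Aux

variable {n : ℕ} (A : Matrix (Fin n) (Fin n) ℝ) (x : Fin n → ℝ)

lemma aux_mulVec_succ (k : ℕ) (i : Fin n) :
    (A ^ (k + 1)).mulVec x i = ∑ j, A i j * (A ^ k).mulVec x j := by
  rw [pow_succ', ← Matrix.mulVec_mulVec]
  simp [Matrix.mulVec, dotProduct]

lemma aux_pos (hn : 2 ≤ n) (hirr : IsIrreducibleMatrix A) (hnonneg : ∀ i j, 0 ≤ A i j)
    (hx : ∀ i, 0 < x i) : ∀ k i, 0 < (A ^ k).mulVec x i := by
  intro k
  induction k with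
  | zero => simpa using hx
  | succ m ih =>
    intro i
    have hrow : ∃ j, A i j ≠ 0 := by
      obtain ⟨i', hi', j, hj, hij⟩ := hirr {i} ⟨i, Finset.mem_singleton_self i⟩ (by
        intro h
        have : Finset.card (Finset.univ : Finset (Fin n)) = 1 := by
          rw [← h]; simp
        simp [Finset.card_univ] at this
        omega)
      rw [Finset.mem_singleton] at hi'
      exact ⟨j, hi' ▸ hij⟩
    obtain ⟨j₀, hj₀⟩ := hrow
    have hAij : 0 < A i j₀ := lt_of_le_of_ne (hnonneg i j₀) (Ne.symm hj₀)
    rw [aux_mulVec_succ A x m i]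
    apply Finset.sum_pos' (fun j _ => mul_nonneg (hnonneg i j) (ih j).le)
    exact ⟨j₀, Finset.mem_univ j₀, mul_pos hAij (ih j₀)⟩

lemma aux_ratio_le (hn : 2 ≤ n) (m : ℕ) (i : Fin n) :
    (A ^ (m + 1)).mulVec x i / (A ^ m).mulVec x i ≤ aSeq A x (m + 1) := by
  have : Nonempty (Fin n) := ⟨⟨0, by omega⟩⟩
  have h := le_ciSup (f := fun j => (A ^ (m + 1)).mulVec x j / (A ^ (m + 1 - 1)).mulVec x j)
    (Set.Finite.bddAbove (Set.finite_range _)) i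
  simpa [aSeq] using h

lemma aux_le_ratio (hn : 2 ≤ n) (m : ℕ) (i : Fin n) :
    bSeq A x (m + 1) ≤ (A ^ (m + 1)).mulVec x i / (A ^ m).mulVec x i := by
  have : Nonempty (Fin n) := ⟨⟨0, by omega⟩⟩
  have h := ciInf_le (f := fun j => (A ^ (m + 1)).mulVec x j / (A ^ (m + 1 - 1)).mulVec x j)
    (Set.Finite.bddBelow (Set.finite_range _)) i
  simpa [bSeq] using h

lemma aux_a_mono (hn : 2 ≤ n) (hirr : IsIrreducibleMatrix A) (hnonneg : ∀ i j, 0 ≤ A i j)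
    (hx : ∀ i, 0 < x i) (m : ℕ) : aSeq A x (m + 2) ≤ aSeq A x (m + 1) := by
  have hpos := aux_pos A x hn hirr hnonneg hx
  have : Nonempty (Fin n) := ⟨⟨0, by omega⟩⟩
  apply ciSup_le
  intro i
  show (A ^ (m + 2)).mulVec x i / (A ^ (m + 1)).mulVec x i ≤ aSeq A x (m + 1)
  rw [div_le_iff₀ (hpos (m + 1) i)]
  rw [aux_mulVec_succ A x (m + 1) i]
  have hstep : ∀ j, A i j * (A ^ (m + 1)).mulVec x j
      ≤ A i j * (aSeq A x (m + 1) * (A ^ m).mulVec x j) := by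
    intro j
    apply mul_le_mul_of_nonneg_left _ (hnonneg i j)
    rw [← div_le_iff₀ (hpos m j)]
    exact aux_ratio_le A x hn m j
  calc ∑ j, A i j * (A ^ (m + 1)).mulVec x j
      ≤ ∑ j, A i j * (aSeq A x (m + 1) * (A ^ m).mulVec x j) :=
        Finset.sum_le_sum (fun j _ => hstep j)
    _ = aSeq A x (m + 1) * ∑ j, A i j * (A ^ m).mulVec x j := by
        rw [Finset.mul_sum]; congr 1; ext j; ring
    _ = aSeq A x (m + 1) * (A ^ (m + 1)).mulVec x i := by
        rw [← aux_mulVec_succ A x m i]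

lemma aux_b_mono (hn : 2 ≤ n) (hirr : IsIrreducibleMatrix A) (hnonneg : ∀ i j, 0 ≤ A i j)
    (hx : ∀ i, 0 < x i) (m : ℕ) : bSeq A x (m + 1) ≤ bSeq A x (m + 2) := by
  have hpos := aux_pos A x hn hirr hnonneg hx
  have : Nonempty (Fin n) := ⟨⟨0, by omega⟩⟩
  apply le_ciInf
  intro i
  show bSeq A x (m + 1) ≤ (A ^ (m + 2)).mulVec x i / (A ^ (m + 1)).mulVec x i
  rw [le_div_iff₀ (hpos (m + 1) i)]
  rw [aux_mulVec_succ A x (m + 1) i]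
  have hstep : ∀ j, A i j * (bSeq A x (m + 1) * (A ^ m).mulVec x j)
      ≤ A i j * (A ^ (m + 1)).mulVec x j := by
    intro j
    apply mul_le_mul_of_nonneg_left _ (hnonneg i j)
    rw [← le_div_iff₀ (hpos m j)]
    exact aux_le_ratio A x hn m j
  calc bSeq A x (m + 1) * (A ^ (m + 1)).mulVec x i
      = bSeq A x (m + 1) * ∑ j, A i j * (A ^ m).mulVec x j := by
        rw [← aux_mulVec_succ A x m i]
    _ = ∑ j, A i j * (bSeq A x (m + 1) * (A ^ m).mulVec x j) := by
        rw [Finset.mul_sum]; congr 1; ext j; ring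
    _ ≤ ∑ j, A i j * (A ^ (m + 1)).mulVec x j :=
        Finset.sum_le_sum (fun j _ => hstep j)

end Aux

/-- For an irreducible nonnegative `A` and entrywise positive `x`:
(i) if `i₁` is a log-concavity index and `g k = (A^k x)_{i₁}`, then there is `k₁ > 0` with
`g (k-1) * g (k+1) ≤ (g k)²` for all `k ≥ k₁`; moreover, if `(a_k(A,x))_{k ≥ k₁}` is strictly
decreasing then the inequality is strict;
(ii) the analogous statement for a log-convexity index `i₂`, `h k = (A^k x)_{i₂}`, with
log-convexity and the sequence `(b_k(A,x))_{k ≥ k₂}` strictly increasing. -/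
theorem logIndex_gives_logConcave_logConvex {n : ℕ} (hn : 2 ≤ n)
    (A : Matrix (Fin n) (Fin n) ℝ) (x : Fin n → ℝ)
    (hirr : IsIrreducibleMatrix A) (hnonneg : ∀ i j, 0 ≤ A i j) (hx : ∀ i, 0 < x i) :
    (∀ i₁ : Fin n, IsLogConcavityIndex A x i₁ →
      ∃ k₁ : ℕ, 0 < k₁ ∧
        (∀ k : ℕ, k₁ ≤ k →
          (A ^ (k - 1)).mulVec x i₁ * (A ^ (k + 1)).mulVec x i₁ ≤ ((A ^ k).mulVec x i₁) ^ 2) ∧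
        ((∀ k : ℕ, k₁ ≤ k → aSeq A x (k + 1) < aSeq A x k) →
          ∀ k : ℕ, k₁ ≤ k →
            (A ^ (k - 1)).mulVec x i₁ * (A ^ (k + 1)).mulVec x i₁ < ((A ^ k).mulVec x i₁) ^ 2)) ∧
    (∀ i₂ : Fin n, IsLogConvexityIndex A x i₂ →
      ∃ k₂ : ℕ, 0 < k₂ ∧
        (∀ k : ℕ, k₂ ≤ k →
          ((A ^ k).mulVec x i₂) ^ 2 ≤ (A ^ (k - 1)).mulVec x i₂ * (A ^ (k + 1)).mulVec x i₂) ∧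
        ((∀ k : ℕ, k₂ ≤ k → bSeq A x k < bSeq A x (k + 1)) →
          ∀ k : ℕ, k₂ ≤ k →
            ((A ^ k).mulVec x i₂) ^ 2 < (A ^ (k - 1)).mulVec x i₂ * (A ^ (k + 1)).mulVec x i₂)) := by
  have hpos := aux_pos A x hn hirr hnonneg hx
  constructor
  · rintro i₁ ⟨K, hK, hlog⟩
    refine ⟨K, hK, ?_, ?_⟩
    · intro k hk
      obtain ⟨m, rfl⟩ : ∃ m, k = m + 1 := ⟨k - 1, by omega⟩
      have h1 : (A ^ (m + 1)).mulVec x i₁ / (A ^ m).mulVec x i₁ = aSeq A x (m + 1) :=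
        hlog (m + 1) hk
      have h2 : (A ^ (m + 2)).mulVec x i₁ / (A ^ (m + 1)).mulVec x i₁ = aSeq A x (m + 2) :=
        hlog (m + 2) (by omega)
      have hle : (A ^ (m + 2)).mulVec x i₁ / (A ^ (m + 1)).mulVec x i₁
          ≤ (A ^ (m + 1)).mulVec x i₁ / (A ^ m).mulVec x i₁ := by
        rw [h1, h2]; exact aux_a_mono A x hn hirr hnonneg hx m
      rw [div_le_div_iff₀ (hpos (m + 1) i₁) (hpos m i₁)] at hle
      have : (m + 1 - 1) = m := rfl
      rw [this]
      nlinarith [hpos m i₁, hpos (m + 1) i₁, hpos (m + 2) i₁]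
    · intro hdec k hk
      obtain ⟨m, rfl⟩ : ∃ m, k = m + 1 := ⟨k - 1, by omega⟩
      have h1 : (A ^ (m + 1)).mulVec x i₁ / (A ^ m).mulVec x i₁ = aSeq A x (m + 1) :=
        hlog (m + 1) hk
      have h2 : (A ^ (m + 2)).mulVec x i₁ / (A ^ (m + 1)).mulVec x i₁ = aSeq A x (m + 2) :=
        hlog (m + 2) (by omega)
      have hlt : (A ^ (m + 2)).mulVec x i₁ / (A ^ (m + 1)).mulVec x i₁
          < (A ^ (m + 1)).mulVec x i₁ / (A ^ m).mulVec x i₁ := by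
        rw [h1, h2]; exact hdec (m + 1) hk
      rw [div_lt_div_iff₀ (hpos (m + 1) i₁) (hpos m i₁)] at hlt
      have : (m + 1 - 1) = m := rfl
      rw [this]
      nlinarith [hpos m i₁, hpos (m + 1) i₁, hpos (m + 2) i₁]
  · rintro i₂ ⟨K, hK, hlog⟩
    refine ⟨K, hK, ?_, ?_⟩
    · intro k hk
      obtain ⟨m, rfl⟩ : ∃ m, k = m + 1 := ⟨k - 1, by omega⟩
      have h1 : (A ^ (m + 1)).mulVec x i₂ / (A ^ m).mulVec x i₂ = bSeq A x (m + 1) :=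
        hlog (m + 1) hk
      have h2 : (A ^ (m + 2)).mulVec x i₂ / (A ^ (m + 1)).mulVec x i₂ = bSeq A x (m + 2) :=
        hlog (m + 2) (by omega)
      have hle : (A ^ (m + 1)).mulVec x i₂ / (A ^ m).mulVec x i₂
          ≤ (A ^ (m + 2)).mulVec x i₂ / (A ^ (m + 1)).mulVec x i₂ := by
        rw [h1, h2]; exact aux_b_mono A x hn hirr hnonneg hx m
      rw [div_le_div_iff₀ (hpos m i₂) (hpos (m + 1) i₂)] at hle
      have : (m + 1 - 1) = m := rfl
      rw [this]
      nlinarith [hpos m i₂, hpos (m + 1) i₂, hpos (m + 2) i₂]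
    · intro hinc k hk
      obtain ⟨m, rfl⟩ : ∃ m, k = m + 1 := ⟨k - 1, by omega⟩
      have h1 : (A ^ (m + 1)).mulVec x i₂ / (A ^ m).mulVec x i₂ = bSeq A x (m + 1) :=
        hlog (m + 1) hk
      have h2 : (A ^ (m + 2)).mulVec x i₂ / (A ^ (m + 1)).mulVec x i₂ = bSeq A x (m + 2) :=
        hlog (m + 2) (by omega)
      have hlt : (A ^ (m + 1)).mulVec x i₂ / (A ^ m).mulVec x i₂
          < (A ^ (m + 2)).mulVec x i₂ / (A ^ (m + 1)).mulVec x i₂ := by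
        rw [h1, h2]; exact hinc (m + 1) hk
      rw [div_lt_div_iff₀ (hpos m i₂) (hpos (m + 1) i₂)] at hlt
      have : (m + 1 - 1) = m := rfl
      rw [this]
      nlinarith [hpos m i₂, hpos (m + 1) i₂, hpos (m + 2) i₂]
end

section
/- Let A be an n×n real matrix (n ≥ 2) that is irreducible, entrywise nonnegative, symmetric and positive semidefinite, and let x ∈ ℝ^n have all entries positive. Let i_1 be a log-concavity index of A associated with x and i_2 be a log-convexity index of A associated with x, and set g_k = (A^{k−1} x)_{i_1} and h_k = (A^{k−1} x)_{i_2} for k ≥ 1. Then there exists k_1 ≥ 1 such that g_{k−1} g_{k+1} ≤ g_k² for all k ≥ k_1 + 1, and there exists k_2 ≥ 1 such that h_{k−1} h_{k+1} ≥ h_k² for all k ≥ k_2 + 1. -/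
open Matrix

section Aux

variable {n : ℕ} (A : Matrix (Fin n) (Fin n) ℝ)

lemma mulVec_pos_aux (hn : 2 ≤ n) (hirr : IsIrreducibleMatrix A)
    (hnonneg : ∀ i j, 0 ≤ A i j) (y : Fin n → ℝ) (hy : ∀ i, 0 < y i) :
    ∀ i, 0 < A.mulVec y i := by
  intro i
  have hmv : ∀ j, A.mulVec y j = ∑ l, A j l * y l := fun j => rfl
  have hnn : ∀ j, 0 ≤ A.mulVec y j := fun j => by
    rw [hmv]
    exact Finset.sum_nonneg fun l _ => mul_nonneg (hnonneg j l) (hy l).le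
  rcases (hnn i).lt_or_eq with h | h
  · exact h
  exfalso
  have hzero : ∀ j, A.mulVec y j = 0 → ∀ l, A j l = 0 := by
    intro j hj l
    rw [hmv] at hj
    have h1 := (Finset.sum_eq_zero_iff_of_nonneg
      (fun l _ => mul_nonneg (hnonneg j l) (hy l).le)).mp hj l (Finset.mem_univ l)
    rcases mul_eq_zero.mp h1 with h' | h'
    · exact h'
    · exact absurd h' (hy l).ne'
  set S : Finset (Fin n) := Finset.univ.filter (fun j => A.mulVec y j = 0) with hS
  have hiS : i ∈ S := Finset.mem_filter.mpr ⟨Finset.mem_univ i, h.symm⟩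
  by_cases hU : S = Finset.univ
  · have hall : ∀ j l, A j l = 0 := by
      intro j l
      have hj : j ∈ S := hU ▸ Finset.mem_univ j
      exact hzero j (Finset.mem_filter.mp hj).2 l
    have h0 : (⟨0, by omega⟩ : Fin n) ≠ ⟨1, by omega⟩ := by simp [Fin.ext_iff]
    obtain ⟨a, _, b, _, hab⟩ := hirr {⟨0, by omega⟩} ⟨_, Finset.mem_singleton_self _⟩
      (by
        intro hEq
        have : (⟨1, by omega⟩ : Fin n) ∈ ({⟨0, by omega⟩} : Finset (Fin n)) :=
          hEq ▸ Finset.mem_univ _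
        exact h0.symm (Finset.mem_singleton.mp this))
    exact hab (hall a b)
  · obtain ⟨a, haS, b, _, hab⟩ := hirr S ⟨i, hiS⟩ hU
    exact hab (hzero a (Finset.mem_filter.mp haS).2 b)

lemma sup_ratio_antitone (hn : 2 ≤ n) (hnonneg : ∀ i j, 0 ≤ A i j) (y : Fin n → ℝ)
    (hy : ∀ i, 0 < y i) (hAy : ∀ i, 0 < A.mulVec y i) :
    (⨆ i, (A.mulVec (A.mulVec y)) i / (A.mulVec y) i) ≤ ⨆ i, (A.mulVec y) i / y i := by
  haveI : Nonempty (Fin n) := ⟨⟨0, by omega⟩⟩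
  set M := ⨆ i, (A.mulVec y) i / y i with hM
  have hle : ∀ i, (A.mulVec y) i ≤ M * y i := by
    intro i
    have : (A.mulVec y) i / y i ≤ M :=
      le_ciSup (f := fun i => (A.mulVec y) i / y i)
        (Set.Finite.bddAbove (Set.finite_range _)) i
    exact (div_le_iff₀ (hy i)).mp this
  refine ciSup_le fun i => ?_
  rw [div_le_iff₀ (hAy i)]
  calc A.mulVec (A.mulVec y) i = ∑ j, A i j * (A.mulVec y) j := by
        simp [Matrix.mulVec, dotProduct]
    _ ≤ ∑ j, A i j * (M * y j) :=
        Finset.sum_le_sum fun j _ => mul_le_mul_of_nonneg_left (hle j) (hnonneg i j)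
    _ = M * ∑ j, A i j * y j := by rw [Finset.mul_sum]; congr 1; ext j; ring
    _ = M * A.mulVec y i := by simp [Matrix.mulVec, dotProduct]

lemma inf_ratio_monotone (hn : 2 ≤ n) (hnonneg : ∀ i j, 0 ≤ A i j) (y : Fin n → ℝ)
    (hy : ∀ i, 0 < y i) (hAy : ∀ i, 0 < A.mulVec y i) :
    (⨅ i, (A.mulVec y) i / y i) ≤ ⨅ i, (A.mulVec (A.mulVec y)) i / (A.mulVec y) i := by
  haveI : Nonempty (Fin n) := ⟨⟨0, by omega⟩⟩
  set m := ⨅ i, (A.mulVec y) i / y i with hm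
  have hle : ∀ i, m * y i ≤ (A.mulVec y) i := by
    intro i
    have : m ≤ (A.mulVec y) i / y i :=
      ciInf_le (f := fun i => (A.mulVec y) i / y i)
        (Set.Finite.bddBelow (Set.finite_range _)) i
    exact (le_div_iff₀ (hy i)).mp this
  refine le_ciInf fun i => ?_
  rw [le_div_iff₀ (hAy i)]
  calc m * A.mulVec y i = m * ∑ j, A i j * y j := by
        simp [Matrix.mulVec, dotProduct]
    _ = ∑ j, A i j * (m * y j) := by rw [Finset.mul_sum]; congr 1; ext j; ring
    _ ≤ ∑ j, A i j * (A.mulVec y) j :=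
        Finset.sum_le_sum fun j _ => mul_le_mul_of_nonneg_left (hle j) (hnonneg i j)
    _ = A.mulVec (A.mulVec y) i := by simp [Matrix.mulVec, dotProduct]

end Aux

/-- Let `A` be `n × n` (`n ≥ 2`) irreducible, entrywise nonnegative, symmetric
positive semidefinite, `x` entrywise positive, `i₁` a log-concavity index and `i₂` a
log-convexity index of `A` associated with `x`, and set `g k = (A^{k-1} x)_{i₁}`,
`h k = (A^{k-1} x)_{i₂}` for `k ≥ 1`. Then `(g_k)` is eventually log-concave and `(h_k)` is
eventually log-convex. -/
theorem eventually_logConcave_logConvex {n : ℕ} (hn : 2 ≤ n)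
    (A : Matrix (Fin n) (Fin n) ℝ) (x : Fin n → ℝ)
    (hirr : IsIrreducibleMatrix A) (hnonneg : ∀ i j, 0 ≤ A i j)
    (hpsd : A.PosSemidef) (hx : ∀ i, 0 < x i)
    (i₁ i₂ : Fin n) (h₁ : IsLogConcavityIndex A x i₁) (h₂ : IsLogConvexityIndex A x i₂) :
    (∃ k₁ : ℕ, 1 ≤ k₁ ∧ ∀ k : ℕ, k₁ + 1 ≤ k →
      (A ^ (k - 1 - 1)).mulVec x i₁ * (A ^ (k + 1 - 1)).mulVec x i₁
        ≤ ((A ^ (k - 1)).mulVec x i₁) ^ 2) ∧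
    (∃ k₂ : ℕ, 1 ≤ k₂ ∧ ∀ k : ℕ, k₂ + 1 ≤ k →
      ((A ^ (k - 1)).mulVec x i₂) ^ 2
        ≤ (A ^ (k - 1 - 1)).mulVec x i₂ * (A ^ (k + 1 - 1)).mulVec x i₂) := by
  have hpos : ∀ k : ℕ, ∀ i, 0 < (A ^ k).mulVec x i := by
    intro k
    induction k with
    | zero => simpa using hx
    | succ m ih =>
        intro i
        have : (A ^ (m + 1)).mulVec x = A.mulVec ((A ^ m).mulVec x) := by
          rw [pow_succ', ← Matrix.mulVec_mulVec]
        rw [this]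
        exact mulVec_pos_aux A hn hirr hnonneg _ ih i
  have hrec : ∀ m : ℕ, (A ^ (m + 1)).mulVec x = A.mulVec ((A ^ m).mulVec x) := by
    intro m; rw [pow_succ', ← Matrix.mulVec_mulVec]
  constructor
  · obtain ⟨K, hK0, hK⟩ := h₁
    refine ⟨K, hK0, fun k hk => ?_⟩
    obtain ⟨m, rfl⟩ : ∃ m, k = m + 2 := ⟨k - 2, by omega⟩
    have e1 : m + 2 - 1 - 1 = m := by omega
    have e2 : m + 2 + 1 - 1 = m + 2 := by omega
    have e3 : m + 2 - 1 = m + 1 := by omega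
    rw [e1, e2, e3]
    have hr1 := hK (m + 1) (by omega)
    have hr2 := hK (m + 2) (by omega)
    rw [e3] at hr2
    rw [show m + 1 - 1 = m from rfl] at hr1
    have hmono := sup_ratio_antitone A hn hnonneg ((A ^ m).mulVec x) (hpos m)
      (by rw [← hrec m]; exact hpos (m + 1))
    rw [← hrec m, ← hrec (m + 1), hrec m, ← hrec m] at hmono
    -- hmono : ⨆ i, (A^(m+2) x)_i / (A^(m+1) x)_i ≤ ⨆ i, (A^(m+1) x)_i / (A^m x)_i
    have hle : (A ^ (m + 2)).mulVec x i₁ / (A ^ (m + 1)).mulVec x i₁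
        ≤ (A ^ (m + 1)).mulVec x i₁ / (A ^ m).mulVec x i₁ := by
      rw [hr1, hr2]; exact hmono
    have h4 := (div_le_div_iff₀ (hpos (m + 1) i₁) (hpos m i₁)).mp hle
    nlinarith [hpos m i₁, hpos (m + 1) i₁, hpos (m + 2) i₁]
  · obtain ⟨K, hK0, hK⟩ := h₂
    refine ⟨K, hK0, fun k hk => ?_⟩
    obtain ⟨m, rfl⟩ : ∃ m, k = m + 2 := ⟨k - 2, by omega⟩
    have e1 : m + 2 - 1 - 1 = m := by omega
    have e2 : m + 2 + 1 - 1 = m + 2 := by omega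
    have e3 : m + 2 - 1 = m + 1 := by omega
    rw [e1, e2, e3]
    have hr1 := hK (m + 1) (by omega)
    have hr2 := hK (m + 2) (by omega)
    rw [e3] at hr2
    rw [show m + 1 - 1 = m from rfl] at hr1
    have hmono := inf_ratio_monotone A hn hnonneg ((A ^ m).mulVec x) (hpos m)
      (by rw [← hrec m]; exact hpos (m + 1))
    rw [← hrec m, ← hrec (m + 1), hrec m, ← hrec m] at hmono
    have hle : (A ^ (m + 1)).mulVec x i₂ / (A ^ m).mulVec x i₂
        ≤ (A ^ (m + 2)).mulVec x i₂ / (A ^ (m + 1)).mulVec x i₂ := by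
      rw [hr1, hr2]; exact hmono
    have h4 := (div_le_div_iff₀ (hpos m i₂) (hpos (m + 1) i₂)).mp hle
    nlinarith [hpos m i₂, hpos (m + 1) i₂, hpos (m + 2) i₂]
end

section
/- Let A be an n×n irreducible nonnegative real matrix (n ≥ 2) and let x ∈ ℝ^n have all entries positive. Suppose x is not a Perron vector of A. If max_{1≤i≤n} (A²x)_i/(Ax)_i ≤ (Ax)_j/x_j for every j ∈ {1,…,n}, then max_{1≤i≤n} (A²x)_i/(Ax)_i < max_{1≤i≤n} (Ax)_i/x_i. -/
open Matrix

/-- The Perron value (spectral radius) of a real square matrix: the supremum of the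
absolute values of its complex eigenvalues (roots of the characteristic polynomial). -/
noncomputable def perronValue {n : ℕ} (A : Matrix (Fin n) (Fin n) ℝ) : ℝ :=
  sSup {r : ℝ | ∃ μ : ℂ, ((A.map Complex.ofReal).charpoly).IsRoot μ ∧ r = ‖μ‖}

/-- A Perron vector of `A`: an eigenvector associated with the Perron value of `A`. -/
def IsPerronVector {n : ℕ} (A : Matrix (Fin n) (Fin n) ℝ) (x : Fin n → ℝ) : Prop :=
  x ≠ 0 ∧ A.mulVec x = perronValue A • x

/-!
If the inequality were not strict, the hypothesis would force every ratio `(Ax)_j / x_j` to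
equal `max_i (A²x)_i / (Ax)_i`, so `x` would be a positive eigenvector of `A`. For a nonnegative
matrix, the eigenvalue `r` of a positive eigenvector is its spectral radius: if `Av = μv` with
`v ≠ 0`, comparing `|v|` with `x` at an index maximizing `|v_i| / x_i` gives `|μ| ≤ r`. Hence `x`
would be a Perron vector.
-/

theorem Matrix.isRoot_charpoly_iff_exists_mulVec_eq_smul {ι K : Type*} [Fintype ι]
    [DecidableEq ι] [Field K] (M : Matrix ι ι K) (μ : K) :
    M.charpoly.IsRoot μ ↔ ∃ v ≠ 0, M *ᵥ v = μ • v := by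
  rw [← Matrix.charpoly_toLin', ← Module.End.hasEigenvalue_iff_isRoot_charpoly]
  constructor
  · intro hμ
    obtain ⟨v, hv⟩ := hμ.exists_hasEigenvector
    exact ⟨v, hv.2, Module.End.mem_eigenspace_iff.mp hv.1⟩
  · rintro ⟨v, hv0, hv⟩
    exact Module.End.hasEigenvalue_of_hasEigenvector ⟨Module.End.mem_eigenspace_iff.mpr hv, hv0⟩

theorem Matrix.norm_le_of_mulVec_le_smul {ι : Type*} [Fintype ι] {A : Matrix ι ι ℝ}
    (hA : ∀ i j, 0 ≤ A i j) {x : ι → ℝ} (hx : ∀ i, 0 < x i) {r : ℝ}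
    (hr : ∀ i, (A *ᵥ x) i ≤ r * x i) {μ : ℂ} {v : ι → ℂ} (hv0 : v ≠ 0)
    (hv : A.map Complex.ofReal *ᵥ v = μ • v) : ‖μ‖ ≤ r := by
  obtain ⟨k, hk⟩ := Function.ne_iff.mp hv0
  have : Nonempty ι := ⟨k⟩
  obtain ⟨i₀, -, hi₀⟩ := Finset.univ.exists_max_image (fun i => ‖v i‖ / x i) Finset.univ_nonempty
  set t := ‖v i₀‖ / x i₀
  have hvx : ∀ j, ‖v j‖ ≤ t * x j := fun j => (div_le_iff₀ (hx j)).mp (hi₀ j (Finset.mem_univ j))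
  have ht : 0 < t := (div_pos (norm_pos_iff.mpr hk) (hx k)).trans_le (hi₀ k (Finset.mem_univ k))
  have hvi₀ : 0 < ‖v i₀‖ := (div_pos_iff_of_pos_right (hx i₀)).mp ht
  refine le_of_mul_le_mul_right ?_ hvi₀
  calc ‖μ‖ * ‖v i₀‖ = ‖∑ j, (A i₀ j : ℂ) * v j‖ := by
        rw [← norm_mul, ← smul_eq_mul, ← Pi.smul_apply, ← hv]; rfl
    _ ≤ ∑ j, A i₀ j * ‖v j‖ := by
        refine (norm_sum_le _ _).trans_eq (Finset.sum_congr rfl fun j _ => ?_)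
        rw [norm_mul, Complex.norm_real, Real.norm_of_nonneg (hA i₀ j)]
    _ ≤ ∑ j, A i₀ j * (t * x j) :=
        Finset.sum_le_sum fun j _ => mul_le_mul_of_nonneg_left (hvx j) (hA i₀ j)
    _ = t * (A *ᵥ x) i₀ := by
        simp only [mulVec, dotProduct, Finset.mul_sum]
        exact Finset.sum_congr rfl fun j _ => by ring
    _ ≤ t * (r * x i₀) := mul_le_mul_of_nonneg_left (hr i₀) ht.le
    _ = r * ‖v i₀‖ := by rw [mul_left_comm, div_mul_cancel₀ _ (hx i₀).ne']

theorem perronValue_eq_of_mulVec_eq_smul {n : ℕ} [NeZero n] {A : Matrix (Fin n) (Fin n) ℝ}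
    (hA : ∀ i j, 0 ≤ A i j) {x : Fin n → ℝ} (hx : ∀ i, 0 < x i) {r : ℝ}
    (hr : A *ᵥ x = r • x) : perronValue A = r := by
  have hbound : ∀ μ : ℂ, (A.map Complex.ofReal).charpoly.IsRoot μ → ‖μ‖ ≤ r := by
    intro μ hμ
    obtain ⟨v, hv0, hv⟩ := (isRoot_charpoly_iff_exists_mulVec_eq_smul _ μ).mp hμ
    exact norm_le_of_mulVec_le_smul hA hx (fun i => by simp [hr]) hv0 hv
  have hroot : (A.map Complex.ofReal).charpoly.IsRoot (r : ℂ) := by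
    refine (isRoot_charpoly_iff_exists_mulVec_eq_smul _ _).mpr
      ⟨fun i => (x i : ℂ), fun h0 => (hx 0).ne' (Complex.ofReal_eq_zero.mp (congrFun h0 0)), ?_⟩
    ext i
    simpa [mulVec, dotProduct] using congrArg Complex.ofReal (congrFun hr i)
  -- `r ≥ 0` comes for free: `|r|` is the modulus of an eigenvalue, hence at most `r`.
  have hnorm : ‖(r : ℂ)‖ = r := le_antisymm (hbound _ hroot) (Complex.norm_real r ▸ le_abs_self r)
  refine IsGreatest.csSup_eq ⟨⟨r, hroot, hnorm.symm⟩, ?_⟩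
  rintro s ⟨μ, hμ, rfl⟩
  exact hbound μ hμ

theorem max_ratio_strict_decrease_case1_general {n : ℕ} (hn : 2 ≤ n)
    (A : Matrix (Fin n) (Fin n) ℝ) (x : Fin n → ℝ)
    (hnonneg : ∀ i j, 0 ≤ A i j) (hx : ∀ i, 0 < x i)
    (hnp : ¬ IsPerronVector A x)
    (h : ∀ j, (⨆ i, A.mulVec (A.mulVec x) i / A.mulVec x i) ≤ A.mulVec x j / x j) :
    (⨆ i, A.mulVec (A.mulVec x) i / A.mulVec x i) < ⨆ i, A.mulVec x i / x i := by
  have : NeZero n := ⟨by omega⟩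
  by_contra! hle
  set M := ⨆ i, A.mulVec (A.mulVec x) i / A.mulVec x i
  have hratio : ∀ j, (A *ᵥ x) j / x j = M := fun j =>
    le_antisymm ((le_ciSup (Set.finite_range _).bddAbove j).trans hle) (h j)
  have heig : A *ᵥ x = M • x := by
    ext j
    rw [Pi.smul_apply, smul_eq_mul, ← hratio j, div_mul_cancel₀ _ (hx j).ne']
  exact hnp ⟨fun h0 => (hx 0).ne' (congrFun h0 0),
    by rwa [perronValue_eq_of_mulVec_eq_smul hnonneg hx heig]⟩

/-- Let `A` be `n × n` (`n ≥ 2`) irreducible and nonnegative, `x` entrywise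
positive and not a Perron vector of `A`. If `max_i (A²x)_i/(Ax)_i ≤ (Ax)_j/x_j` for every
`j`, then `max_i (A²x)_i/(Ax)_i < max_i (Ax)_i/x_i`. -/
theorem max_ratio_strict_decrease_case1 {n : ℕ} (hn : 2 ≤ n)
    (A : Matrix (Fin n) (Fin n) ℝ) (x : Fin n → ℝ)
    (hirr : IsIrreducibleMatrix A) (hnonneg : ∀ i j, 0 ≤ A i j) (hx : ∀ i, 0 < x i)
    (hnp : ¬ IsPerronVector A x)
    (h : ∀ j, (⨆ i, A.mulVec (A.mulVec x) i / A.mulVec x i) ≤ A.mulVec x j / x j) :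
    (⨆ i, A.mulVec (A.mulVec x) i / A.mulVec x i) < ⨆ i, A.mulVec x i / x i :=
  max_ratio_strict_decrease_case1_general hn A x hnonneg hx hnp h
end

section
/- Let A be an n×n irreducible nonnegative real matrix (n ≥ 2) with entries a_{i,j}, and let x ∈ ℝ^n have all entries positive. Suppose x is not a Perron vector of A, and suppose there exist indices i_0, j_0 ∈ {1,…,n} such that (Ax)_{j_0}/x_{j_0} < max_{1≤i≤n} (A²x)_i/(Ax)_i = (A²x)_{i_0}/(Ax)_{i_0} and a_{i_0,j_0} ≠ 0. Then max_{1≤i≤n} (A²x)_i/(Ax)_i < max_{1≤i≤n} (Ax)_i/x_i. -/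
open Matrix

/-
Write `y = Ax`, `z = Ay` and `R = max_i y_i / x_i`, so that `y ≤ R x` entrywise. Applying the
nonnegative matrix `A` gives `z ≤ R y`, hence `max_i z_i / y_i ≤ R`. By hypothesis the ratio at
`j₀` is below this maximum, so `y_{j₀} < R x_{j₀}`; since `a_{i₀ j₀} > 0` this strict inequality
survives in row `i₀` of `A`, giving `z_{i₀} < R y_{i₀}`, and the maximum of `z_i / y_i` is attained
at `i₀`.
-/

namespace Matrix

variable {m n R : Type*} [Fintype n]

theorem mulVec_mono_of_nonneg [Semiring R] [PartialOrder R] [IsOrderedRing R]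
    {A : Matrix m n R} (hA : ∀ i j, 0 ≤ A i j) {u v : n → R} (huv : u ≤ v) :
    A *ᵥ u ≤ A *ᵥ v :=
  fun i => dotProduct_le_dotProduct_of_nonneg_left huv (hA i)

theorem mulVec_apply_lt_of_nonneg [Semiring R] [PartialOrder R] [IsStrictOrderedRing R]
    {A : Matrix m n R} (hA : ∀ i j, 0 ≤ A i j) {u v : n → R} (huv : u ≤ v) {i : m} {j : n}
    (hAij : 0 < A i j) (hj : u j < v j) :
    (A *ᵥ u) i < (A *ᵥ v) i :=
  Finset.sum_lt_sum (fun k _ => mul_le_mul_of_nonneg_left (huv k) (hA i k))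
    ⟨j, Finset.mem_univ j, mul_lt_mul_of_pos_left hj hAij⟩

end Matrix

open Matrix

section RatioBounds

variable {ι : Type*}

theorem ciSup_div_le_of_le_smul {f g : ι → ℝ} {r : ℝ} (hr : 0 ≤ r) (hg : 0 ≤ g)
    (hfg : f ≤ r • g) :
    ⨆ i, f i / g i ≤ r :=
  Real.iSup_le (fun i => div_le_of_le_mul₀ (hg i) hr (hfg i)) hr

theorem le_ciSup_div_smul [Finite ι] (f : ι → ℝ) {x : ι → ℝ} (hx : ∀ i, 0 < x i) :
    f ≤ (⨆ j, f j / x j) • x := fun i =>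
  (div_le_iff₀ (hx i)).1 (le_ciSup (f := fun j => f j / x j) (Set.finite_range _).bddAbove i)

variable [Fintype ι] {A : Matrix ι ι ℝ} {x : ι → ℝ}

theorem ciSup_div_mulVec_mulVec_le (hA : ∀ i j, 0 ≤ A i j) (hx : ∀ i, 0 < x i) :
    ⨆ i, (A *ᵥ (A *ᵥ x)) i / (A *ᵥ x) i ≤ ⨆ i, (A *ᵥ x) i / x i := by
  have hAx : 0 ≤ A *ᵥ x := fun i => dotProduct_nonneg_of_nonneg (hA i) (fun j => (hx j).le)
  refine ciSup_div_le_of_le_smul (Real.iSup_nonneg fun i => div_nonneg (hAx i) (hx i).le) hAx ?_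
  rw [← mulVec_smul]
  exact mulVec_mono_of_nonneg hA (le_ciSup_div_smul _ hx)

end RatioBounds

theorem max_ratio_strict_decrease_case2_general {n : ℕ}
    (A : Matrix (Fin n) (Fin n) ℝ) (x : Fin n → ℝ)
    (hnonneg : ∀ i j, 0 ≤ A i j) (hx : ∀ i, 0 < x i)
    (i₀ j₀ : Fin n)
    (h₁ : A.mulVec x j₀ / x j₀ < ⨆ i, A.mulVec (A.mulVec x) i / A.mulVec x i)
    (h₂ : (⨆ i, A.mulVec (A.mulVec x) i / A.mulVec x i)
            = A.mulVec (A.mulVec x) i₀ / A.mulVec x i₀)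
    (h₃ : A i₀ j₀ ≠ 0) :
    (⨆ i, A.mulVec (A.mulVec x) i / A.mulVec x i) < ⨆ i, A.mulVec x i / x i := by
  set R := ⨆ i, A.mulVec x i / x i
  have hA₀ : 0 < A i₀ j₀ := (hnonneg i₀ j₀).lt_of_ne' h₃
  have hj₀ : (A *ᵥ x) j₀ < (R • x) j₀ :=
    (div_lt_iff₀ (hx j₀)).1 (h₁.trans_le (ciSup_div_mulVec_mulVec_le hnonneg hx))
  have hi₀ : (A *ᵥ (A *ᵥ x)) i₀ < R * (A *ᵥ x) i₀ := by
    change _ < (R • A *ᵥ x) i₀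
    rw [← mulVec_smul]
    exact mulVec_apply_lt_of_nonneg hnonneg (le_ciSup_div_smul _ hx) hA₀ hj₀
  have hAx₀ : 0 < (A *ᵥ x) i₀ := by
    simpa using mulVec_apply_lt_of_nonneg (u := 0) hnonneg (fun i => (hx i).le) hA₀ (hx j₀)
  rw [h₂]
  exact (div_lt_iff₀ hAx₀).2 hi₀

/-- Let `A` be `n × n` (`n ≥ 2`) irreducible and nonnegative, `x` entrywise
positive and not a Perron vector of `A`. Suppose there are indices `i₀, j₀` with
`(Ax)_{j₀}/x_{j₀} < max_i (A²x)_i/(Ax)_i = (A²x)_{i₀}/(Ax)_{i₀}` and `A i₀ j₀ ≠ 0`.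
Then `max_i (A²x)_i/(Ax)_i < max_i (Ax)_i/x_i`. -/
theorem max_ratio_strict_decrease_case2 {n : ℕ} (hn : 2 ≤ n)
    (A : Matrix (Fin n) (Fin n) ℝ) (x : Fin n → ℝ)
    (hirr : IsIrreducibleMatrix A) (hnonneg : ∀ i j, 0 ≤ A i j) (hx : ∀ i, 0 < x i)
    (hnp : ¬ IsPerronVector A x)
    (i₀ j₀ : Fin n)
    (h₁ : A.mulVec x j₀ / x j₀ < ⨆ i, A.mulVec (A.mulVec x) i / A.mulVec x i)
    (h₂ : (⨆ i, A.mulVec (A.mulVec x) i / A.mulVec x i)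
            = A.mulVec (A.mulVec x) i₀ / A.mulVec x i₀)
    (h₃ : A i₀ j₀ ≠ 0) :
    (⨆ i, A.mulVec (A.mulVec x) i / A.mulVec x i) < ⨆ i, A.mulVec x i / x i :=
  max_ratio_strict_decrease_case2_general A x hnonneg hx i₀ j₀ h₁ h₂ h₃
end

section
/- Let A be an n×n real matrix that is entrywise nonnegative, symmetric and positive definite, and let x ∈ ℝ^n be a nonzero entrywise nonnegative vector that is not an eigenvector of A. Then the sequence (c_k(A,x))_{k≥1} is strictly increasing and c_k(A,x) ≤ ρ(A) for every k ≥ 1; moreover, if x is not orthogonal to the eigenspace of A for the eigenvalue ρ(A), then c_k(A,x) converges to ρ(A) as k → ∞. -/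
open Matrix Filter

/-- `c_k(A,x) = (xᵀ A^k x)/(xᵀ A^{k-1} x)` for `k ≥ 1`. -/
noncomputable def cSeq {n : ℕ} (A : Matrix (Fin n) (Fin n) ℝ) (x : Fin n → ℝ) (k : ℕ) : ℝ :=
  (x ⬝ᵥ (A ^ k).mulVec x) / (x ⬝ᵥ (A ^ (k - 1)).mulVec x)

/-!
In an orthonormal eigenbasis of `A`, with `y` the coordinates of `x`, the numbers
`m_k = xᵀ A^k x = ∑ yᵢ² λᵢ^k` are the moments of the weights `yᵢ²` placed at the eigenvalues
`λᵢ > 0`. Monotonicity of `c_k = m_k / m_{k-1}` is the strict Cauchy–Schwarz inequality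
`m_{k+1}² < m_k m_{k+2}` for the inner product defined by `A^k`, applied to `x` and `Ax`, which are
independent because `x` is not an eigenvector. As `ρ(A) = max λᵢ`, `m_{k+1} ≤ ρ m_k`. If `x` meets
the `ρ`-eigenspace, some `yᵢ ≠ 0` has `λᵢ = ρ`; then `m_k / ρ^k` converges to the positive total
weight at `ρ`, so `m_{k+1} / m_k → ρ`.
-/

open Topology

namespace Matrix

protected theorem PosDef.pow {ι K : Type*} [Fintype ι] [DecidableEq ι] [Field K] [PartialOrder K]
    [StarRing K] [StarOrderedRing K] {M : Matrix ι ι K} (hM : M.PosDef) : ∀ k : ℕ, (M ^ k).PosDef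
  | 0 => by simpa using PosDef.one
  | 1 => by simpa using hM
  | k + 2 => by
    rw [pow_succ, pow_succ']
    simpa only [hM.isHermitian.eq] using
      (hM.pow k).mul_mul_conjTranspose_same (vecMul_injective_iff_isUnit.mpr hM.isUnit)

variable {ι : Type*} [Fintype ι]

theorem IsHermitian.mulVec_dotProduct {A : Matrix ι ι ℝ} (hA : A.IsHermitian) (u w : ι → ℝ) :
    A *ᵥ u ⬝ᵥ w = u ⬝ᵥ A *ᵥ w := by
  rw [dotProduct_mulVec, ← mulVec_transpose, ← conjTranspose_eq_transpose_of_trivial, hA.eq]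

theorem PosDef.sq_dotProduct_mulVec_lt {B : Matrix ι ι ℝ} (hB : B.PosDef) {u w : ι → ℝ}
    (hu : u ≠ 0) (huw : ¬∃ μ : ℝ, w = μ • u) :
    (u ⬝ᵥ B *ᵥ w) ^ 2 < (u ⬝ᵥ B *ᵥ u) * (w ⬝ᵥ B *ᵥ w) := by
  have hBu : 0 < u ⬝ᵥ B *ᵥ u := by simpa using hB.dotProduct_mulVec_pos hu
  set z := (u ⬝ᵥ B *ᵥ u) • w - (u ⬝ᵥ B *ᵥ w) • u
  have hz : z ≠ 0 := by
    refine fun h => huw ⟨(u ⬝ᵥ B *ᵥ w) / (u ⬝ᵥ B *ᵥ u), ?_⟩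
    rw [sub_eq_zero] at h
    rw [div_eq_inv_mul, mul_smul, ← h, inv_smul_smul₀ hBu.ne']
  have hsymm : w ⬝ᵥ B *ᵥ u = u ⬝ᵥ B *ᵥ w := by
    rw [← hB.isHermitian.mulVec_dotProduct, dotProduct_comm]
  have hBz : z ⬝ᵥ B *ᵥ z =
      (u ⬝ᵥ B *ᵥ u) * ((u ⬝ᵥ B *ᵥ u) * (w ⬝ᵥ B *ᵥ w) - (u ⬝ᵥ B *ᵥ w) ^ 2) := by
    simp only [z, mulVec_sub, mulVec_smul, sub_dotProduct, dotProduct_sub, smul_dotProduct,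
      dotProduct_smul, smul_eq_mul, hsymm]
    ring
  have hpos := hB.dotProduct_mulVec_pos hz
  rw [star_trivial, hBz] at hpos
  exact sub_pos.mp ((pos_iff_pos_of_mul_pos hpos).mp hBu)

namespace IsHermitian

variable [DecidableEq ι] {A : Matrix ι ι ℝ} (hA : A.IsHermitian)

noncomputable def eigenCoords (x : ι → ℝ) : ι → ℝ :=
  star (hA.eigenvectorUnitary : Matrix ι ι ℝ) *ᵥ x

theorem dotProduct_eq_eigenCoords_dotProduct (x v : ι → ℝ) :
    x ⬝ᵥ v = hA.eigenCoords x ⬝ᵥ hA.eigenCoords v := by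
  rw [eigenCoords, eigenCoords, dotProduct_mulVec, star_eq_conjTranspose,
    conjTranspose_eq_transpose_of_trivial, mulVec_transpose, vecMul_vecMul,
    ← conjTranspose_eq_transpose_of_trivial, ← star_eq_conjTranspose,
    Unitary.mul_star_self_of_mem hA.eigenvectorUnitary.2, vecMul_one]

theorem star_eigenvectorUnitary_mul_eq_diagonal_mul :
    star (hA.eigenvectorUnitary : Matrix ι ι ℝ) * A =
      diagonal hA.eigenvalues * star (hA.eigenvectorUnitary : Matrix ι ι ℝ) := by
  have h := hA.conjStarAlgAut_star_eigenvectorUnitary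
  rw [Unitary.conjStarAlgAut_star_apply, RCLike.ofReal_real_eq_id, Function.id_comp] at h
  rw [← h, Matrix.mul_assoc _ (hA.eigenvectorUnitary : Matrix ι ι ℝ),
    Unitary.mul_star_self_of_mem hA.eigenvectorUnitary.2, Matrix.mul_one]

theorem eigenCoords_mulVec (v : ι → ℝ) (i : ι) :
    hA.eigenCoords (A *ᵥ v) i = hA.eigenvalues i * hA.eigenCoords v i := by
  rw [eigenCoords, eigenCoords, mulVec_mulVec, star_eigenvectorUnitary_mul_eq_diagonal_mul,
    ← mulVec_mulVec, mulVec_diagonal]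

theorem eigenCoords_pow_mulVec (v : ι → ℝ) (k : ℕ) (i : ι) :
    hA.eigenCoords (A ^ k *ᵥ v) i = hA.eigenvalues i ^ k * hA.eigenCoords v i := by
  induction k with
  | zero => simp
  | succ k ih => rw [pow_succ', ← mulVec_mulVec, eigenCoords_mulVec, ih, pow_succ', mul_assoc]

theorem dotProduct_pow_mulVec_eq_sum (x : ι → ℝ) (k : ℕ) :
    x ⬝ᵥ A ^ k *ᵥ x = ∑ i, hA.eigenCoords x i ^ 2 * hA.eigenvalues i ^ k := by
  rw [hA.dotProduct_eq_eigenCoords_dotProduct, dotProduct]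
  exact Finset.sum_congr rfl fun i _ => by rw [eigenCoords_pow_mulVec]; ring

theorem exists_eigenCoords_ne_zero_of_mulVec_eq_smul {x v : ι → ℝ} {r : ℝ}
    (hv : A *ᵥ v = r • v) (hxv : x ⬝ᵥ v ≠ 0) :
    ∃ i, hA.eigenCoords x i ≠ 0 ∧ hA.eigenvalues i = r := by
  rw [hA.dotProduct_eq_eigenCoords_dotProduct] at hxv
  obtain ⟨i, -, hi⟩ := Finset.exists_ne_zero_of_sum_ne_zero hxv
  obtain ⟨hxi, hvi⟩ := mul_ne_zero_iff.mp hi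
  refine ⟨i, hxi, mul_right_cancel₀ hvi ?_⟩
  rw [← eigenCoords_mulVec, hv, eigenCoords, eigenCoords, mulVec_smul, Pi.smul_apply, smul_eq_mul]

end IsHermitian

theorem IsHermitian.perronValue_eq_iSup_abs_eigenvalues {n : ℕ}
    {A : Matrix (Fin n) (Fin n) ℝ} (hA : A.IsHermitian) :
    perronValue A = ⨆ i, |hA.eigenvalues i| := by
  have hroot (μ : ℂ) :
      ((A.map Complex.ofReal).charpoly).IsRoot μ ↔ ∃ i, μ = hA.eigenvalues i := by
    rw [show A.map Complex.ofReal = A.map Complex.ofRealHom from rfl, charpoly_map, hA.charpoly_eq]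
    simp [Polynomial.map_prod, Polynomial.eval_prod, Finset.prod_eq_zero_iff, sub_eq_zero]
  rw [perronValue, iSup]
  congr 1
  ext r
  constructor
  · rintro ⟨μ, hμ, rfl⟩
    obtain ⟨i, rfl⟩ := (hroot μ).1 hμ
    exact ⟨i, by simp⟩
  · rintro ⟨i, rfl⟩
    exact ⟨_, (hroot _).2 ⟨i, rfl⟩, by simp⟩

theorem IsHermitian.eigenvalues_le_perronValue {n : ℕ}
    {A : Matrix (Fin n) (Fin n) ℝ} (hA : A.IsHermitian) (i : Fin n) :
    hA.eigenvalues i ≤ perronValue A := by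
  rw [hA.perronValue_eq_iSup_abs_eigenvalues]
  exact (le_abs_self _).trans
    (le_ciSup (f := fun i => |hA.eigenvalues i|) (Set.finite_range _).bddAbove i)

end Matrix

section PowerSums

variable {ι : Type*} [Fintype ι] {a l : ι → ℝ} {m : ℝ}

theorem sum_mul_pow_succ_le_mul_sum (ha : ∀ i, 0 ≤ a i) (hl : ∀ i, 0 ≤ l i)
    (hlm : ∀ i, l i ≤ m) (k : ℕ) :
    ∑ i, a i * l i ^ (k + 1) ≤ m * ∑ i, a i * l i ^ k := by
  rw [Finset.mul_sum]
  refine Finset.sum_le_sum fun i _ => ?_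
  rw [pow_succ, ← mul_assoc, mul_comm m]
  exact mul_le_mul_of_nonneg_left (hlm i) (mul_nonneg (ha i) (pow_nonneg (hl i) k))

theorem tendsto_sum_mul_pow_succ_div_sum_mul_pow (ha : ∀ i, 0 ≤ a i) (hl : ∀ i, 0 ≤ l i)
    (hlm : ∀ i, l i ≤ m) (hm : 0 < m) {j : ι} (haj : 0 < a j) (hlj : l j = m) :
    Tendsto (fun k : ℕ => (∑ i, a i * l i ^ (k + 1)) / ∑ i, a i * l i ^ k) atTop (𝓝 m) := by
  set M : ℕ → ℝ := fun k => ∑ i, a i * (l i / m) ^ k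
  set S := ∑ i, if l i = m then a i else 0
  have hM : Tendsto M atTop (𝓝 S) := by
    refine tendsto_finsetSum _ fun i _ => ?_
    by_cases hi : l i = m
    · simp [hi, hm.ne']
    · have hlt : l i / m < 1 := (div_lt_one hm).mpr ((hlm i).lt_of_ne hi)
      simpa [hi] using
        (tendsto_pow_atTop_nhds_zero_of_lt_one (div_nonneg (hl i) hm.le) hlt).const_mul (a i)
  have hS : 0 < S := by
    refine haj.trans_le ?_
    convert Finset.single_le_sum (f := fun i => if l i = m then a i else 0)
      (fun i _ => by split_ifs <;> simp [ha i]) (Finset.mem_univ j)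
    simp [hlj]
  have hsum (k : ℕ) : ∑ i, a i * l i ^ k = m ^ k * M k := by
    rw [Finset.mul_sum]
    refine Finset.sum_congr rfl fun i _ => ?_
    rw [div_pow]
    field_simp
  have hratio (k : ℕ) :
      (∑ i, a i * l i ^ (k + 1)) / ∑ i, a i * l i ^ k = m * (M (k + 1) / M k) := by
    rw [hsum, hsum, pow_succ', mul_assoc, mul_left_comm,
      mul_div_mul_left _ _ (pow_ne_zero k hm.ne'), mul_div_assoc]
  simp_rw [hratio]
  simpa [hS.ne'] using ((hM.comp (tendsto_add_atTop_nat 1)).div hM hS.ne').const_mul m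

end PowerSums

theorem cSeq_strictMono_le_perron_general {n : ℕ}
    (A : Matrix (Fin n) (Fin n) ℝ) (x : Fin n → ℝ)
    (hpd : A.PosDef)
    (hx0 : x ≠ 0)
    (heig : ¬ ∃ μ : ℝ, A.mulVec x = μ • x) :
    (∀ k : ℕ, 1 ≤ k → cSeq A x k < cSeq A x (k + 1)) ∧
    (∀ k : ℕ, 1 ≤ k → cSeq A x k ≤ perronValue A) ∧
    ((∃ v : Fin n → ℝ, A.mulVec v = perronValue A • v ∧ x ⬝ᵥ v ≠ 0) →
      Tendsto (fun k : ℕ => cSeq A x k) atTop (nhds (perronValue A))) := by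
  have hA := hpd.isHermitian
  have hcSeq (k : ℕ) : cSeq A x (k + 1) = (x ⬝ᵥ A ^ (k + 1) *ᵥ x) / (x ⬝ᵥ A ^ k *ᵥ x) := rfl
  have hpos (k : ℕ) : 0 < x ⬝ᵥ A ^ k *ᵥ x := by
    simpa using (hpd.pow k).dotProduct_mulVec_pos hx0
  have hmoment := hA.dotProduct_pow_mulVec_eq_sum x
  have hweights (i : Fin n) : 0 ≤ hA.eigenCoords x i ^ 2 := sq_nonneg _
  have hlam (i : Fin n) : 0 ≤ hA.eigenvalues i := hpd.posSemidef.eigenvalues_nonneg i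
  refine ⟨fun k hk => ?_, fun k hk => ?_, fun ⟨v, hv, hxv⟩ => ?_⟩
  · obtain ⟨k, rfl⟩ := Nat.exists_eq_add_of_le' hk
    have hCS := (hpd.pow k).sq_dotProduct_mulVec_lt hx0 heig
    rw [hA.mulVec_dotProduct, mulVec_mulVec, mulVec_mulVec, ← pow_succ, ← pow_succ'] at hCS
    rw [hcSeq, hcSeq, div_lt_div_iff₀ (hpos _) (hpos _)]
    linear_combination hCS
  · obtain ⟨k, rfl⟩ := Nat.exists_eq_add_of_le' hk
    rw [hcSeq, div_le_iff₀ (hpos k), hmoment, hmoment]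
    exact sum_mul_pow_succ_le_mul_sum hweights hlam hA.eigenvalues_le_perronValue k
  · obtain ⟨j, hxj, hj⟩ := hA.exists_eigenCoords_ne_zero_of_mulVec_eq_smul hv hxv
    have hlim := tendsto_sum_mul_pow_succ_div_sum_mul_pow hweights hlam
      hA.eigenvalues_le_perronValue (hj ▸ hpd.eigenvalues_pos j) (by positivity) hj
    rw [← tendsto_add_atTop_iff_nat 1]
    simpa only [hcSeq, hmoment] using hlim

/-- Let `A` be entrywise nonnegative, symmetric positive definite, and let
`x` be a nonzero entrywise nonnegative vector that is not an eigenvector of `A`. Then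
`(c_k(A,x))_{k≥1}` is strictly increasing and bounded above by `ρ(A)`; moreover, if `x` is not
orthogonal to the eigenspace of `A` for the eigenvalue `ρ(A)`, then `c_k(A,x) → ρ(A)`. -/
theorem cSeq_strictMono_le_perron {n : ℕ}
    (A : Matrix (Fin n) (Fin n) ℝ) (x : Fin n → ℝ)
    (hnonneg : ∀ i j, 0 ≤ A i j) (hpd : A.PosDef)
    (hx0 : x ≠ 0) (hx : ∀ i, 0 ≤ x i)
    (heig : ¬ ∃ μ : ℝ, A.mulVec x = μ • x) :
    (∀ k : ℕ, 1 ≤ k → cSeq A x k < cSeq A x (k + 1)) ∧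
    (∀ k : ℕ, 1 ≤ k → cSeq A x k ≤ perronValue A) ∧
    ((∃ v : Fin n → ℝ, A.mulVec v = perronValue A • v ∧ x ⬝ᵥ v ≠ 0) →
      Tendsto (fun k : ℕ => cSeq A x k) atTop (nhds (perronValue A))) :=
  cSeq_strictMono_le_perron_general A x hpd hx0 heig
end

section
/- Let d ≥ 1 and r ≥ 1 be integers and let n = d + r. Let M be the n×n real matrix (indices 1,…,n) with M_{ij} = min(i,j) for i, j ≤ d; M_{ij} = 1 whenever exactly one of i, j exceeds d; M_{ij} = 1 for i ≠ j with both i, j > d; and M_{ii} = 2 for i > d. Let Q be the n×n real matrix with Q_{ij} = min(i,j) for i, j ≤ d with (i,j) ≠ (d,d), Q_{dd} = d + r; Q_{ij} = 1 if exactly one of i, j exceeds d and the other equals d, or if i = j > d; and Q_{ij} = 0 otherwise. (M and Q are, respectively, the bottleneck matrix and the neckbottle matrix of the rooted broom B_1(d,r).) Let 1 denote the all-ones vector of size n. Then 1ᵀM³1 = V_1(d,r), 1ᵀM²1 = V_2(d,r), 1ᵀQ³1 = U_1(d,r), and 1ᵀQ²1 = U_2(d,r), where: U_1(d,r) = 4r³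 + 2(d² + 3d + 4)r² + (1/12)(13d⁴ + 26d³ + 41d² + 28d + 48)r + (1/2520)d(d+1)(2d+1)(68d⁴ + 136d³ + 133d² + 65d + 18); U_2(d,r) = 4r² + 2(d² + d + 2)r + (1/30)d(d+1)(2d+1)(2d² + 2d + 1); V_1(d,r) = r⁴ + (4d + 3)r³ + (1/2)(2d+3)(d+2)(d+1)r² + (1/15)(d+1)(4d⁴ + 16d³ + 19d² + 21d + 15)r + (1/2520)d(2d+1)(d+1)(68d⁴ + 136d³ + 133d² + 65d + 18); V_2(d,r) = r³ + (3d + 2)r² + (1/3)(d+1)(2d² + 4d + 3)r + (1/30)d(2d+1)(d+1)(2d² + 2d + 1). -/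
open Matrix

/-- The bottleneck matrix of the rooted broom `B₁(d,r)` (path on `d` vertices with `r` pendent
vertices attached to one end-vertex, rooted at the attachment vertex), with vertex `i`
(1-based) represented by `⟨i-1⟩ : Fin (d+r)`: `min(i,j)` for `i, j ≤ d`, `1` if exactly one of
`i, j` exceeds `d`, `1` off the diagonal when both exceed `d`, and `2` on the diagonal when
`i > d`. -/
def broomB1Bottleneck (d r : ℕ) : Matrix (Fin (d + r)) (Fin (d + r)) ℝ := fun i j =>
  if (i : ℕ) < d ∧ (j : ℕ) < d then ((min ((i : ℕ) + 1) ((j : ℕ) + 1) : ℕ) : ℝ)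
  else if (i : ℕ) = (j : ℕ) then 2
  else 1

/-- The neckbottle matrix `Q = NNᵀ` of the rooted broom `B₁(d,r)` (with `N` its path matrix):
`min(i,j)` for `i, j ≤ d` with `(i,j) ≠ (d,d)`, `Q_{dd} = d + r`, `1` if exactly one of `i, j`
exceeds `d` and the other equals `d`, `1` on the diagonal for `i = j > d`, and `0`
otherwise. -/
def broomB1Neckbottle (d r : ℕ) : Matrix (Fin (d + r)) (Fin (d + r)) ℝ := fun i j =>
  if (i : ℕ) < d ∧ (j : ℕ) < d then
    (if (i : ℕ) + 1 = d ∧ (j : ℕ) + 1 = d then ((d : ℝ) + r)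
     else ((min ((i : ℕ) + 1) ((j : ℕ) + 1) : ℕ) : ℝ))
  else if (i : ℕ) = (j : ℕ) then 1
  else if (i : ℕ) + 1 = d ∨ (j : ℕ) + 1 = d then 1
  else 0

/-!
Order the vertices as the path `1, …, d` followed by the `r` pendent vertices. In block form
`M = [[P, J], [J, I + J]]`, where `P = (min(i,j))` is the bottleneck matrix of the path and `J`
is all-ones, while `Q` is `[[P, 0], [0, I]]` except that `Q_{dd}` gains `r` and row and column
`d` meet the pendent block in ones. Both matrices are symmetric, so `𝟙ᵀA²𝟙 = |A𝟙|²` and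
`𝟙ᵀA³𝟙 = (A𝟙)ᵀA(A𝟙)`; the block forms express `A𝟙` and `A(A𝟙)` through `P𝟙` and `P²𝟙`.
Everything is thereby reduced to the path quantities `𝟙ᵀP𝟙`, `|P𝟙|²`, `(P𝟙)ᵀP(P𝟙)` and the last
entries of `P𝟙` and `P²𝟙`, which are sums of explicit polynomials over the path.
-/

open Finset

namespace Matrix.IsSymm

variable {n R : Type*} [Fintype n] [CommSemiring R] {A : Matrix n n R}

theorem dotProduct_mulVec (hA : A.IsSymm) (x y : n → R) : x ⬝ᵥ A *ᵥ y = A *ᵥ x ⬝ᵥ y := by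
  rw [Matrix.dotProduct_mulVec, ← mulVec_transpose, hA.eq]

variable [DecidableEq n]

theorem dotProduct_pow_two_mulVec (hA : A.IsSymm) (x : n → R) :
    x ⬝ᵥ (A ^ 2) *ᵥ x = A *ᵥ x ⬝ᵥ A *ᵥ x := by
  rw [sq, ← mulVec_mulVec, hA.dotProduct_mulVec]

theorem dotProduct_pow_three_mulVec (hA : A.IsSymm) (x : n → R) :
    x ⬝ᵥ (A ^ 3) *ᵥ x = A *ᵥ x ⬝ᵥ A *ᵥ (A *ᵥ x) := by
  rw [pow_succ', ← mulVec_mulVec, hA.dotProduct_mulVec, sq, ← mulVec_mulVec]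

end Matrix.IsSymm

theorem Fin.append_dotProduct_append {R : Type*} [NonUnitalNonAssocSemiring R] {m n : ℕ}
    (x x' : Fin m → R) (y y' : Fin n → R) :
    Fin.append x y ⬝ᵥ Fin.append x' y' = x ⬝ᵥ x' + y ⬝ᵥ y' := by
  simp [dotProduct, Fin.sum_univ_add]

theorem Fin.append_one_one {R : Type*} [One R] {m n : ℕ} :
    Fin.append (1 : Fin m → R) (1 : Fin n → R) = 1 := by
  ext i
  refine Fin.addCases (fun i => ?_) (fun k => ?_) i <;> simp

theorem sum_range_min_mul {R : Type*} [Semiring R] (f : ℕ → R) {m d : ℕ} (hmd : m ≤ d) :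
    ∑ j ∈ range d, ((min m (j + 1) : ℕ) : R) * f j =
      ∑ j ∈ range m, ((j : R) + 1) * f j + m * ∑ j ∈ Ico m d, f j := by
  rw [← sum_range_add_sum_Ico _ hmd, mul_sum]
  congr 1
  · refine sum_congr rfl fun j hj => ?_
    rw [min_eq_right (mem_range.mp hj)]
    push_cast; rfl
  · refine sum_congr rfl fun j hj => ?_
    rw [min_eq_left (Nat.le_succ_of_le (mem_Ico.mp hj).1)]

def pathBottleneck (d : ℕ) : Matrix (Fin d) (Fin d) ℝ :=
  of fun i j => ((min ((i : ℕ) + 1) ((j : ℕ) + 1) : ℕ) : ℝ)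

-- Closed forms of the entries of `P𝟙` and `P²𝟙` at the `y`-th path vertex, counted from the
-- root (`y = i + 1` for `i : Fin d`).
noncomputable def pathRowSum (d y : ℝ) : ℝ := y * (2 * d + 1 - y) / 2

noncomputable def pathSqRowSum (d y : ℝ) : ℝ :=
  y * (y ^ 3 - 2 * (2 * d + 1) * y ^ 2 - y + (2 * d + 1) ^ 3 + (2 * d + 1)) / 24

theorem pathBottleneck_isSymm (d : ℕ) : (pathBottleneck d).IsSymm :=
  IsSymm.ext fun i j => by simp [pathBottleneck, min_comm]

theorem pathBottleneck_mulVec_apply {d : ℕ} {v : Fin d → ℝ} (x : ℕ → ℝ) (hv : ∀ j, v j = x j)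
    (i : Fin d) :
    (pathBottleneck d *ᵥ v) i =
      ∑ j ∈ range (i + 1), ((j : ℝ) + 1) * x j
        + ((i : ℝ) + 1) * ∑ j ∈ Ico ((i : ℕ) + 1) d, x j := by
  simp only [mulVec, dotProduct, pathBottleneck, of_apply, hv]
  rw [Fin.sum_univ_eq_sum_range (fun j => ((min ((i : ℕ) + 1) (j + 1) : ℕ) : ℝ) * x j),
    sum_range_min_mul _ i.isLt]
  push_cast; rfl

-- The summands depend on the path length, so it is kept as a free real parameter `d` while the
-- number of terms `n` runs; the path itself is the case `n = d`.
theorem sum_range_pathRowSum (d : ℝ) (n : ℕ) :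
    ∑ j ∈ range n, pathRowSum d ((j : ℝ) + 1) = n * (n + 1) * (3 * d - n + 1) / 6 := by
  induction n with
  | zero => simp
  | succ n ih => rw [sum_range_succ, ih, pathRowSum]; push_cast; ring

theorem sum_range_mul_pathRowSum (d : ℝ) (n : ℕ) :
    ∑ j ∈ range n, ((j : ℝ) + 1) * pathRowSum d ((j : ℝ) + 1) =
      n * (n + 1) * (2 * (2 * d + 1) * (2 * n + 1) - 3 * n * (n + 1)) / 24 := by
  induction n with
  | zero => simp
  | succ n ih => rw [sum_range_succ, ih, pathRowSum]; push_cast; ring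

theorem pathBottleneck_mulVec_one {d : ℕ} :
    pathBottleneck d *ᵥ 1 = fun i : Fin d => pathRowSum d ((i : ℕ) + 1) := by
  ext i
  have gauss (n : ℕ) : ∑ j ∈ range n, ((j : ℝ) + 1) = n * (n + 1) / 2 := by
    induction n with
    | zero => simp
    | succ n ih => rw [sum_range_succ, ih]; push_cast; ring
  rw [pathBottleneck_mulVec_apply (v := 1) (fun _ => 1) fun _ => rfl]
  simp only [mul_one, sum_const, Nat.card_Ico, nsmul_eq_mul, gauss, pathRowSum]
  rw [Nat.cast_sub i.isLt]
  push_cast; ring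

theorem pathBottleneck_mulVec_pathRowSum {d : ℕ} :
    pathBottleneck d *ᵥ (fun i : Fin d => pathRowSum d ((i : ℕ) + 1)) =
      fun i : Fin d => pathSqRowSum d ((i : ℕ) + 1) := by
  ext i
  rw [pathBottleneck_mulVec_apply (fun j => pathRowSum d ((j : ℝ) + 1)) fun _ => rfl,
    sum_Ico_eq_sub _ i.isLt, sum_range_mul_pathRowSum, sum_range_pathRowSum,
    sum_range_pathRowSum, pathSqRowSum]
  push_cast; ring

theorem one_dotProduct_pathBottleneck_mulVec_one (d : ℕ) :
    1 ⬝ᵥ pathBottleneck d *ᵥ 1 = (d : ℝ) * (d + 1) * (2 * d + 1) / 6 := by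
  rw [pathBottleneck_mulVec_one, one_dotProduct,
    Fin.sum_univ_eq_sum_range (fun j => pathRowSum d ((j : ℝ) + 1)), sum_range_pathRowSum]
  ring

theorem pathBottleneck_mulVec_one_dotProduct_self (d : ℕ) :
    (pathBottleneck d *ᵥ 1) ⬝ᵥ (pathBottleneck d *ᵥ 1) =
      (d : ℝ) * (d + 1) * (2 * d + 1) * (2 * d ^ 2 + 2 * d + 1) / 30 := by
  have hsum (d : ℝ) (n : ℕ) :
      ∑ j ∈ range n, pathRowSum d ((j : ℝ) + 1) * pathRowSum d ((j : ℝ) + 1) =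
        n * (n + 1) * ((n - 1) * (3 * n ^ 2 - 2) - 5 * d * (n - 1) * (3 * n + 2)
          + 10 * d ^ 2 * (2 * n + 1)) / 60 := by
    induction n with
    | zero => simp
    | succ n ih => rw [sum_range_succ, ih, pathRowSum]; push_cast; ring
  rw [pathBottleneck_mulVec_one, dotProduct,
    Fin.sum_univ_eq_sum_range
      (fun j => pathRowSum d ((j : ℝ) + 1) * pathRowSum d ((j : ℝ) + 1)), hsum]
  ring

theorem pathBottleneck_mulVec_one_dotProduct_mulVec (d : ℕ) :
    (pathBottleneck d *ᵥ 1) ⬝ᵥ pathBottleneck d *ᵥ (pathBottleneck d *ᵥ 1) =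
      (d : ℝ) * (d + 1) * (2 * d + 1) * (68 * d ^ 4 + 136 * d ^ 3 + 133 * d ^ 2 + 65 * d + 18)
        / 2520 := by
  have hsum (d : ℝ) (n : ℕ) :
      ∑ j ∈ range n, pathRowSum d ((j : ℝ) + 1) * pathSqRowSum d ((j : ℝ) + 1) =
        n * (n + 1) * ((1 - n) * (15 * n ^ 4 - 69 * n ^ 2 + 36)
          + 7 * d * (15 * n ^ 4 + 6 * n ^ 3 - 66 * n ^ 2 + 11 * n + 34)
          + 7 * d ^ 2 * (-24 * n ^ 3 - 81 * n ^ 2 + 91 * n + 74)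
          + 70 * d ^ 3 * (-3 * n ^ 2 + 13 * n + 8) + 280 * d ^ 4 * (2 * n + 1)) / 5040 := by
    induction n with
    | zero => simp
    | succ n ih => rw [sum_range_succ, ih, pathRowSum, pathSqRowSum]; push_cast; ring
  rw [pathBottleneck_mulVec_one, pathBottleneck_mulVec_pathRowSum, dotProduct,
    Fin.sum_univ_eq_sum_range
      (fun j => pathRowSum d ((j : ℝ) + 1) * pathSqRowSum d ((j : ℝ) + 1)), hsum]
  ring

theorem pathBottleneck_last_last (e : ℕ) :
    pathBottleneck (e + 1) (Fin.last e) (Fin.last e) = (e : ℝ) + 1 := by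
  simp [pathBottleneck]

theorem pathBottleneck_mulVec_one_last (e : ℕ) :
    (pathBottleneck (e + 1) *ᵥ 1) (Fin.last e) = ((e : ℝ) + 1) * (e + 2) / 2 := by
  simp only [pathBottleneck_mulVec_one, Fin.val_last, pathRowSum]
  push_cast; ring

theorem pathBottleneck_mulVec_mulVec_one_last (e : ℕ) :
    (pathBottleneck (e + 1) *ᵥ (pathBottleneck (e + 1) *ᵥ 1)) (Fin.last e) =
      ((e : ℝ) + 1) * (e + 2) * (5 * (e + 1) ^ 2 + 5 * (e + 1) + 2) / 24 := by
  simp only [pathBottleneck_mulVec_one, pathBottleneck_mulVec_pathRowSum, Fin.val_last,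
    pathSqRowSum]
  push_cast; ring

theorem broomB1Bottleneck_isSymm (d r : ℕ) : (broomB1Bottleneck d r).IsSymm :=
  IsSymm.ext fun i j => by
    simp only [broomB1Bottleneck]
    split_ifs <;> first | (exfalso; omega) | simp [min_comm]

theorem broomB1Bottleneck_mulVec_append {d r : ℕ} (x : Fin d → ℝ) (y : Fin r → ℝ) :
    broomB1Bottleneck d r *ᵥ Fin.append x y =
      Fin.append (pathBottleneck d *ᵥ x + (1 ⬝ᵥ y) • 1) ((1 ⬝ᵥ x + 1 ⬝ᵥ y) • 1 + y) := by
  ext i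
  refine Fin.addCases (fun i => ?_) (fun k => ?_) i
  · have (k : Fin r) : (i : ℕ) ≠ d + k := by omega
    simp [mulVec, dotProduct, Fin.sum_univ_add, broomB1Bottleneck, pathBottleneck, this]
  · have (j : Fin d) : d + (k : ℕ) ≠ j := by omega
    have hy (l : Fin r) : (if k = l then 2 * y l else y l) = y l + if k = l then y l else 0 := by
      split_ifs <;> ring
    simp only [mulVec, dotProduct, broomB1Bottleneck, Fin.val_natAdd, add_lt_iff_neg_left,
      not_lt_zero, false_and, ↓reduceIte, ite_mul, one_mul, Fin.sum_univ_add, Fin.val_castAdd,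
      this, Fin.append_left, Nat.add_left_cancel_iff, Fin.val_inj, Fin.append_right, hy,
      sum_add_distrib, sum_ite_eq, mem_univ, Pi.one_apply, Pi.add_apply, Pi.smul_apply,
      smul_eq_mul, mul_one]
    ring

theorem broomB1Bottleneck_mulVec_one (d r : ℕ) :
    broomB1Bottleneck d r *ᵥ 1 =
      Fin.append (pathBottleneck d *ᵥ 1 + (r : ℝ) • 1) (((d : ℝ) + r + 1) • 1) := by
  rw [← Fin.append_one_one, broomB1Bottleneck_mulVec_append]
  simp [one_dotProduct_one, add_smul]

theorem broomB1Neckbottle_isSymm (d r : ℕ) : (broomB1Neckbottle d r).IsSymm :=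
  IsSymm.ext fun i j => by
    simp only [broomB1Neckbottle]
    split_ifs <;> first | (exfalso; omega) | simp [min_comm]

section neckbottle

variable {e r : ℕ}

theorem broomB1Neckbottle_castAdd_castAdd (i j : Fin (e + 1)) :
    broomB1Neckbottle (e + 1) r (Fin.castAdd r i) (Fin.castAdd r j) =
      pathBottleneck (e + 1) i j + if i = Fin.last e ∧ j = Fin.last e then (r : ℝ) else 0 := by
  have := i.isLt; have := j.isLt
  simp only [broomB1Neckbottle, pathBottleneck, of_apply, Fin.val_castAdd, Fin.ext_iff,
    Fin.val_last]
  split_ifs <;> first | (exfalso; omega) | simp_all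

theorem broomB1Neckbottle_castAdd_natAdd (i : Fin (e + 1)) (k : Fin r) :
    broomB1Neckbottle (e + 1) r (Fin.castAdd r i) (Fin.natAdd (e + 1) k) =
      if i = Fin.last e then 1 else 0 := by
  have := i.isLt
  simp only [broomB1Neckbottle, Fin.val_castAdd, Fin.val_natAdd, Fin.ext_iff, Fin.val_last]
  split_ifs <;> first | rfl | (exfalso; omega)

theorem broomB1Neckbottle_natAdd_castAdd (k : Fin r) (j : Fin (e + 1)) :
    broomB1Neckbottle (e + 1) r (Fin.natAdd (e + 1) k) (Fin.castAdd r j) =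
      if j = Fin.last e then 1 else 0 := by
  have := j.isLt
  simp only [broomB1Neckbottle, Fin.val_castAdd, Fin.val_natAdd, Fin.ext_iff, Fin.val_last]
  split_ifs <;> first | rfl | (exfalso; omega)

theorem broomB1Neckbottle_natAdd_natAdd (k l : Fin r) :
    broomB1Neckbottle (e + 1) r (Fin.natAdd (e + 1) k) (Fin.natAdd (e + 1) l) =
      if k = l then 1 else 0 := by
  simp only [broomB1Neckbottle, Fin.val_natAdd, Fin.ext_iff]
  split_ifs <;> first | rfl | (exfalso; omega)

theorem broomB1Neckbottle_mulVec_append (x : Fin (e + 1) → ℝ) (y : Fin r → ℝ) :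
    broomB1Neckbottle (e + 1) r *ᵥ Fin.append x y =
      Fin.append
        (pathBottleneck (e + 1) *ᵥ x + Pi.single (Fin.last e) (r * x (Fin.last e) + 1 ⬝ᵥ y))
        (x (Fin.last e) • 1 + y) := by
  ext i
  refine Fin.addCases (fun i => ?_) (fun k => ?_) i
  · simp only [mulVec, dotProduct, Fin.sum_univ_add (a := e + 1),
      broomB1Neckbottle_castAdd_castAdd, ite_and, Fin.append_left, add_mul, ite_mul, zero_mul,
      sum_add_distrib, sum_ite_irrel, sum_ite_eq', mem_univ, ↓reduceIte, sum_const_zero,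
      broomB1Neckbottle_castAdd_natAdd, Fin.append_right, one_mul, Pi.one_apply, Pi.add_apply,
      Pi.single_apply]
    split_ifs <;> ring
  · simp [mulVec, dotProduct, Fin.sum_univ_add (a := e + 1), broomB1Neckbottle_natAdd_castAdd,
      broomB1Neckbottle_natAdd_natAdd]

theorem broomB1Neckbottle_mulVec_one :
    broomB1Neckbottle (e + 1) r *ᵥ 1 =
      Fin.append (pathBottleneck (e + 1) *ᵥ 1 + Pi.single (Fin.last e) (2 * (r : ℝ)))
        ((2 : ℝ) • 1) := by
  rw [← Fin.append_one_one, broomB1Neckbottle_mulVec_append]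
  simp [one_dotProduct_one, two_mul, two_smul]

end neckbottle

theorem broomB1_moment_formulas_general (d r : ℕ) (hd : 1 ≤ d) :
    ((1 : Fin (d + r) → ℝ) ⬝ᵥ (broomB1Bottleneck d r ^ 3).mulVec 1
        = (r : ℝ) ^ 4 + (4 * d + 3) * r ^ 3
          + (1 / 2) * (2 * d + 3) * (d + 2) * (d + 1) * r ^ 2
          + (1 / 15) * (d + 1) * (4 * (d : ℝ) ^ 4 + 16 * d ^ 3 + 19 * d ^ 2 + 21 * d + 15) * r
          + (1 / 2520) * d * (2 * d + 1) * (d + 1)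
              * (68 * (d : ℝ) ^ 4 + 136 * d ^ 3 + 133 * d ^ 2 + 65 * d + 18)) ∧
    ((1 : Fin (d + r) → ℝ) ⬝ᵥ (broomB1Bottleneck d r ^ 2).mulVec 1
        = (r : ℝ) ^ 3 + (3 * d + 2) * r ^ 2
          + (1 / 3) * (d + 1) * (2 * (d : ℝ) ^ 2 + 4 * d + 3) * r
          + (1 / 30) * d * (2 * d + 1) * (d + 1) * (2 * (d : ℝ) ^ 2 + 2 * d + 1)) ∧
    ((1 : Fin (d + r) → ℝ) ⬝ᵥ (broomB1Neckbottle d r ^ 3).mulVec 1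
        = 4 * (r : ℝ) ^ 3 + 2 * ((d : ℝ) ^ 2 + 3 * d + 4) * r ^ 2
          + (1 / 12) * (13 * (d : ℝ) ^ 4 + 26 * d ^ 3 + 41 * d ^ 2 + 28 * d + 48) * r
          + (1 / 2520) * d * (d + 1) * (2 * d + 1)
              * (68 * (d : ℝ) ^ 4 + 136 * d ^ 3 + 133 * d ^ 2 + 65 * d + 18)) ∧
    ((1 : Fin (d + r) → ℝ) ⬝ᵥ (broomB1Neckbottle d r ^ 2).mulVec 1
        = 4 * (r : ℝ) ^ 2 + 2 * ((d : ℝ) ^ 2 + d + 2) * r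
          + (1 / 30) * d * (d + 1) * (2 * d + 1) * (2 * (d : ℝ) ^ 2 + 2 * d + 1)) := by
  obtain ⟨e, rfl⟩ := Nat.exists_eq_add_of_le' hd
  have hP := pathBottleneck_isSymm (e + 1)
  refine ⟨?_, ?_, ?_, ?_⟩
  · rw [(broomB1Bottleneck_isSymm _ r).dotProduct_pow_three_mulVec, broomB1Bottleneck_mulVec_one,
      broomB1Bottleneck_mulVec_append, Fin.append_dotProduct_append]
    simp only [mulVec_add, mulVec_smul, dotProduct_add, add_dotProduct, dotProduct_smul,
      smul_dotProduct, smul_eq_mul, one_dotProduct_one, Fintype.card_fin,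
      dotProduct_comm (pathBottleneck (e + 1) *ᵥ 1) 1,
      hP.dotProduct_mulVec 1 (pathBottleneck _ *ᵥ 1)]
    rw [pathBottleneck_mulVec_one_dotProduct_mulVec, pathBottleneck_mulVec_one_dotProduct_self,
      one_dotProduct_pathBottleneck_mulVec_one]
    ring
  · rw [(broomB1Bottleneck_isSymm _ r).dotProduct_pow_two_mulVec, broomB1Bottleneck_mulVec_one,
      Fin.append_dotProduct_append]
    simp only [dotProduct_add, add_dotProduct, dotProduct_smul, smul_dotProduct, smul_eq_mul,
      one_dotProduct_one, Fintype.card_fin, dotProduct_comm (pathBottleneck (e + 1) *ᵥ 1) 1]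
    rw [pathBottleneck_mulVec_one_dotProduct_self, one_dotProduct_pathBottleneck_mulVec_one]
    ring
  · rw [(broomB1Neckbottle_isSymm _ r).dotProduct_pow_three_mulVec, broomB1Neckbottle_mulVec_one,
      broomB1Neckbottle_mulVec_append, Fin.append_dotProduct_append]
    simp only [mulVec_add, dotProduct_add, add_dotProduct, dotProduct_smul, smul_dotProduct,
      smul_eq_mul, one_dotProduct_one, Fintype.card_fin, single_dotProduct, Pi.add_apply]
    rw [pathBottleneck_mulVec_one_dotProduct_mulVec, hP.dotProduct_mulVec (pathBottleneck _ *ᵥ 1)]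
    simp only [dotProduct_single, mulVec_single, Pi.smul_apply, col_apply, op_smul_eq_mul,
      Pi.single_eq_same, pathBottleneck_mulVec_one_last, pathBottleneck_mulVec_mulVec_one_last,
      pathBottleneck_last_last]
    push_cast; ring
  · rw [(broomB1Neckbottle_isSymm _ r).dotProduct_pow_two_mulVec, broomB1Neckbottle_mulVec_one,
      Fin.append_dotProduct_append]
    simp only [dotProduct_add, add_dotProduct, dotProduct_smul, smul_dotProduct, smul_eq_mul,
      one_dotProduct_one, Fintype.card_fin, dotProduct_single, single_dotProduct,
      Pi.single_eq_same, Pi.add_apply]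
    rw [pathBottleneck_mulVec_one_dotProduct_self, pathBottleneck_mulVec_one_last]
    push_cast; ring

/-- For the bottleneck matrix `M` and the neckbottle matrix `Q` of the
rooted broom `B₁(d,r)` and the all-ones vector `𝟙`, the quantities `𝟙ᵀM³𝟙`, `𝟙ᵀM²𝟙`, `𝟙ᵀQ³𝟙`
and `𝟙ᵀQ²𝟙` are given by the explicit polynomials `V₁(d,r)`, `V₂(d,r)`, `U₁(d,r)` and
`U₂(d,r)` respectively. -/
theorem broomB1_moment_formulas (d r : ℕ) (hd : 1 ≤ d) (hr : 1 ≤ r) :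
    ((1 : Fin (d + r) → ℝ) ⬝ᵥ (broomB1Bottleneck d r ^ 3).mulVec 1
        = (r : ℝ) ^ 4 + (4 * d + 3) * r ^ 3
          + (1 / 2) * (2 * d + 3) * (d + 2) * (d + 1) * r ^ 2
          + (1 / 15) * (d + 1) * (4 * (d : ℝ) ^ 4 + 16 * d ^ 3 + 19 * d ^ 2 + 21 * d + 15) * r
          + (1 / 2520) * d * (2 * d + 1) * (d + 1)
              * (68 * (d : ℝ) ^ 4 + 136 * d ^ 3 + 133 * d ^ 2 + 65 * d + 18)) ∧
    ((1 : Fin (d + r) → ℝ) ⬝ᵥ (broomB1Bottleneck d r ^ 2).mulVec 1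
        = (r : ℝ) ^ 3 + (3 * d + 2) * r ^ 2
          + (1 / 3) * (d + 1) * (2 * (d : ℝ) ^ 2 + 4 * d + 3) * r
          + (1 / 30) * d * (2 * d + 1) * (d + 1) * (2 * (d : ℝ) ^ 2 + 2 * d + 1)) ∧
    ((1 : Fin (d + r) → ℝ) ⬝ᵥ (broomB1Neckbottle d r ^ 3).mulVec 1
        = 4 * (r : ℝ) ^ 3 + 2 * ((d : ℝ) ^ 2 + 3 * d + 4) * r ^ 2
          + (1 / 12) * (13 * (d : ℝ) ^ 4 + 26 * d ^ 3 + 41 * d ^ 2 + 28 * d + 48) * r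
          + (1 / 2520) * d * (d + 1) * (2 * d + 1)
              * (68 * (d : ℝ) ^ 4 + 136 * d ^ 3 + 133 * d ^ 2 + 65 * d + 18)) ∧
    ((1 : Fin (d + r) → ℝ) ⬝ᵥ (broomB1Neckbottle d r ^ 2).mulVec 1
        = 4 * (r : ℝ) ^ 2 + 2 * ((d : ℝ) ^ 2 + d + 2) * r
          + (1 / 30) * d * (d + 1) * (2 * d + 1) * (2 * (d : ℝ) ^ 2 + 2 * d + 1)) :=
  broomB1_moment_formulas_general d r hd
end
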